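/- arXiv:2108.13167 — 6 statements merged into one kernel-verified Lean document; each statement's English description precedes it below -/
import Mathlib

section
/- Suppose ν ∈ ℝ^m and μ ∈ ℝ^n have all entries strictly positive, ν satisfies the capacity condition for (μ,E), and ∑_{i∈I} ν_i = ∑_{j∈J} μ_j. Then there exist d ≥ 1 and pairwise disjoint nonempty sets I_1,…,I_d ⊆ I whose union is I such that the linear span in ℝ^m of the set of indicator vectors {𝟙_S : S ⊆ I binding} equals the linear span of {𝟙_{I_1},…,𝟙_{I_d}}. -/
open scoped Classical

noncomputable section

variable {m n : ℕ}

/-- The transportation polytope `T_E(ν,μ)`: nonnegative `m × n` matrices with row sums `ν`,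
column sums `μ`, supported on the edge set `E`. -/
def transportationPolytope (ν : Fin m → ℝ) (μ : Fin n → ℝ)
    (E : Finset (Fin m × Fin n)) : Set (Fin m → Fin n → ℝ) :=
  {x | (∀ i j, 0 ≤ x i j) ∧ (∀ i, ∑ j, x i j = ν i) ∧
    (∀ j, ∑ i, x i j = μ j) ∧ ∀ i j, (i, j) ∉ E → x i j = 0}

/-- The neighborhood `N_F(S) = {j : ∃ i ∈ S, (i,j) ∈ F}`. -/
def nbr (F : Finset (Fin m × Fin n)) (S : Finset (Fin m)) : Finset (Fin n) :=
  Finset.univ.filter fun j => ∃ i ∈ S, (i, j) ∈ F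

/-- `ν` satisfies the capacity condition for `(μ, E)`. -/
def capacityCond (ν : Fin m → ℝ) (μ : Fin n → ℝ) (E : Finset (Fin m × Fin n)) : Prop :=
  ∀ S : Finset (Fin m), ∑ i ∈ S, ν i ≤ ∑ j ∈ nbr E S, μ j

/-- The CRP condition for `(ν, μ, E)`. -/
def crpCond (ν : Fin m → ℝ) (μ : Fin n → ℝ) (E : Finset (Fin m × Fin n)) : Prop :=
  (∑ i, ν i) = (∑ j, μ j) ∧
  ∀ S : Finset (Fin m), S.Nonempty → S ≠ Finset.univ →
    ∑ i ∈ S, ν i < ∑ j ∈ nbr E S, μ j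

/-- The bipartite simple graph `G(F)` on `I ⊔ J` determined by the edge set `F`. -/
def bipartiteGraph (F : Finset (Fin m × Fin n)) : SimpleGraph (Fin m ⊕ Fin n) :=
  SimpleGraph.fromRel fun u v => ∃ i j, u = Sum.inl i ∧ v = Sum.inr j ∧ (i, j) ∈ F

/-- The number of connected components of `G(F)`. -/
def numComponents (F : Finset (Fin m × Fin n)) : ℕ :=
  Nat.card (bipartiteGraph F).ConnectedComponent

/-- The set `E_r` of redundant edges of `T_E(ν,μ)`. -/
def redundantEdges (ν : Fin m → ℝ) (μ : Fin n → ℝ)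
    (E : Finset (Fin m × Fin n)) : Finset (Fin m × Fin n) :=
  E.filter fun e => ∀ x ∈ transportationPolytope ν μ E, x e.1 e.2 = 0

/-- The ERP number of `T_E(ν,μ)`: the number of connected components of `G(E ∖ E_r)`. -/
def erpNumber (ν : Fin m → ℝ) (μ : Fin n → ℝ) (E : Finset (Fin m × Fin n)) : ℕ :=
  numComponents (E \ redundantEdges ν μ E)

/-- The support edge set `B(x) = {(i,j) ∈ E : x_{ij} > 0}`. -/
def supportEdges (E : Finset (Fin m × Fin n)) (x : Fin m → Fin n → ℝ) :
    Finset (Fin m × Fin n) :=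
  E.filter fun e => 0 < x e.1 e.2

/-- The indicator vector `𝟙_S ∈ ℝ^m` of `S ⊆ I`. -/
def indicatorVec (S : Finset (Fin m)) : Fin m → ℝ := fun i => if i ∈ S then 1 else 0

/-- `S ⊆ I` is binding if `∑_{i∈S} ν_i = ∑_{j∈N_E(S)} μ_j`. -/
def IsBinding (ν : Fin m → ℝ) (μ : Fin n → ℝ) (E : Finset (Fin m × Fin n))
    (S : Finset (Fin m)) : Prop :=
  (∑ i ∈ S, ν i) = ∑ j ∈ nbr E S, μ j

/-- The greatest common divisor of all `m + n` components of `ν` and `μ`. -/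
def gcdVec (ν : Fin m → ℕ) (μ : Fin n → ℕ) : ℕ :=
  Nat.gcd (Finset.univ.gcd ν) (Finset.univ.gcd μ)

/-- `d_⋆ = max {1, m + n − (∑ᵢ νᵢ) / gcd(ν,μ)}`. -/
def dStar (ν : Fin m → ℕ) (μ : Fin n → ℕ) : ℕ :=
  max 1 (m + n - (∑ i, ν i) / gcdVec ν μ)

/-- The CRP-gap `δ_F(ν,μ)` of the edge set `F` (computed with respect to the redundant
edges of `T_F(ν,μ)`). -/
def crpGap (ν : Fin m → ℝ) (μ : Fin n → ℝ) (F : Finset (Fin m × Fin n)) : ℝ :=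
  sInf {t : ℝ | ∃ C : Finset (Fin m),
    (∑ i ∈ C, ν i) < (∑ j ∈ nbr (F \ redundantEdges ν μ F) C, μ j) ∧
    t = (∑ j ∈ nbr F C, μ j) - ∑ i ∈ C, ν i}

/-- The CRP-graph relation `R` on the connected components of `G(E ∖ E_r)`:
`R c₁ c₂` holds iff `c₁ ≠ c₂` and some edge `(i,j) ∈ E` has `i` in the demand side of `c₁`
and `j` in the supply side of `c₂`. -/
def crpRel (ν : Fin m → ℝ) (μ : Fin n → ℝ) (E : Finset (Fin m × Fin n)) :
    (bipartiteGraph (E \ redundantEdges ν μ E)).ConnectedComponent →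
    (bipartiteGraph (E \ redundantEdges ν μ E)).ConnectedComponent → Prop :=
  fun c₁ c₂ => c₁ ≠ c₂ ∧ ∃ i j, (i, j) ∈ E ∧
    (bipartiteGraph (E \ redundantEdges ν μ E)).connectedComponentMk (Sum.inl i) = c₁ ∧
    (bipartiteGraph (E \ redundantEdges ν μ E)).connectedComponentMk (Sum.inr j) = c₂

end


section Stmt0Aux

open Finset

variable {m n : ℕ} {ν : Fin m → ℝ} {μ : Fin n → ℝ} {E : Finset (Fin m × Fin n)}

lemma nbr_union (E : Finset (Fin m × Fin n)) (A B : Finset (Fin m)) :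
    nbr E (A ∪ B) = nbr E A ∪ nbr E B := by
  ext j
  simp only [nbr, Finset.mem_filter, Finset.mem_univ, true_and, Finset.mem_union]
  constructor
  · rintro ⟨i, hi | hi, he⟩
    · exact Or.inl ⟨i, hi, he⟩
    · exact Or.inr ⟨i, hi, he⟩
  · rintro (⟨i, hi, he⟩ | ⟨i, hi, he⟩)
    · exact ⟨i, Or.inl hi, he⟩
    · exact ⟨i, Or.inr hi, he⟩

lemma nbr_mono (E : Finset (Fin m × Fin n)) {A B : Finset (Fin m)} (h : A ⊆ B) :
    nbr E A ⊆ nbr E B := by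
  intro j hj; simp [nbr] at hj ⊢; obtain ⟨i, hi, he⟩ := hj; exact ⟨i, h hi, he⟩

lemma indicator_union (A B : Finset (Fin m)) :
    indicatorVec (A ∪ B) = indicatorVec A + indicatorVec B - indicatorVec (A ∩ B) := by
  funext i
  by_cases hA : i ∈ A <;> by_cases hB : i ∈ B <;>
    simp [indicatorVec, Finset.mem_union, Finset.mem_inter, hA, hB]

lemma indicator_sdiff {A B : Finset (Fin m)} (h : B ⊆ A) :
    indicatorVec (A \ B) = indicatorVec A - indicatorVec B := by
  funext i
  by_cases hB : i ∈ B
  · simp [indicatorVec, hB, h hB]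
  · by_cases hA : i ∈ A <;> simp [indicatorVec, hA, hB]

lemma mem_inf_iff {𝒯 : Finset (Finset (Fin m))} {i : Fin m} :
    i ∈ 𝒯.inf id ↔ ∀ S ∈ 𝒯, i ∈ S := by
  induction 𝒯 using Finset.induction_on with
  | empty => simp
  | insert h ih => simp_all [Finset.inf_insert]

lemma binding_union_inter (hμ : ∀ j, 0 < μ j) (hcap : capacityCond ν μ E)
    {A B : Finset (Fin m)} (hA : IsBinding ν μ E A) (hB : IsBinding ν μ E B) :
    IsBinding ν μ E (A ∪ B) ∧ IsBinding ν μ E (A ∩ B) := by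
  have hsubn : nbr E (A ∩ B) ⊆ nbr E A ∩ nbr E B :=
    Finset.subset_inter (nbr_mono E Finset.inter_subset_left)
      (nbr_mono E Finset.inter_subset_right)
  have h1 : ∑ j ∈ nbr E (A ∩ B), μ j ≤ ∑ j ∈ nbr E A ∩ nbr E B, μ j :=
    Finset.sum_le_sum_of_subset_of_nonneg hsubn (fun j _ _ => (hμ j).le)
  have h2 : ∑ j ∈ nbr E A ∪ nbr E B, μ j + ∑ j ∈ nbr E A ∩ nbr E B, μ j
      = ∑ j ∈ nbr E A, μ j + ∑ j ∈ nbr E B, μ j := Finset.sum_union_inter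
  have h3 : ∑ i ∈ A ∪ B, ν i + ∑ i ∈ A ∩ B, ν i = ∑ i ∈ A, ν i + ∑ i ∈ B, ν i :=
    Finset.sum_union_inter
  have h4 := hcap (A ∪ B)
  have h5 := hcap (A ∩ B)
  rw [nbr_union] at h4
  unfold IsBinding at hA hB ⊢
  rw [nbr_union]
  constructor <;> linarith

lemma binding_univ (hμ : ∀ j, 0 < μ j) (hcap : capacityCond ν μ E)
    (htot : (∑ i, ν i) = ∑ j, μ j) : IsBinding ν μ E Finset.univ := by
  have h1 : ∑ j ∈ nbr E Finset.univ, μ j ≤ ∑ j, μ j :=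
    Finset.sum_le_sum_of_subset_of_nonneg (Finset.subset_univ _) (fun j _ _ => (hμ j).le)
  have h2 := hcap Finset.univ
  unfold IsBinding
  linarith

lemma inf_binding (hμ : ∀ j, 0 < μ j) (hcap : capacityCond ν μ E)
    (htot : (∑ i, ν i) = ∑ j, μ j) (𝒯 : Finset (Finset (Fin m)))
    (hb : ∀ S ∈ 𝒯, IsBinding ν μ E S) : IsBinding ν μ E (𝒯.inf id) := by
  induction 𝒯 using Finset.induction_on with
  | empty => simpa [Finset.top_eq_univ] using binding_univ hμ hcap htot
  | @insert A 𝒯' hA ih =>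
    rw [Finset.inf_insert]
    have h1 := hb A (Finset.mem_insert_self A 𝒯')
    have h2 := ih (fun S hS => hb S (Finset.mem_insert_of_mem hS))
    exact (binding_union_inter hμ hcap h1 h2).2

lemma sup_indicator_mem (hμ : ∀ j, 0 < μ j) (hcap : capacityCond ν μ E) :
    ∀ (N : ℕ) (𝒯 : Finset (Finset (Fin m))), 𝒯.card ≤ N →
      (∀ S ∈ 𝒯, IsBinding ν μ E S) →
      indicatorVec (𝒯.sup id) ∈
        Submodule.span ℝ {v : Fin m → ℝ | ∃ S, IsBinding ν μ E S ∧ v = indicatorVec S} := by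
  intro N
  induction N with
  | zero =>
    intro 𝒯 hcard _
    have h0 : 𝒯 = ∅ := Finset.card_eq_zero.mp (Nat.le_zero.mp hcard)
    subst h0
    have he : indicatorVec (m := m) (∅ : Finset (Fin m)) = 0 := by
      funext i; simp [indicatorVec]
    simp only [Finset.sup_empty, Finset.bot_eq_empty, he]
    exact Submodule.zero_mem _
  | succ N ih =>
    intro 𝒯 hcard hbind
    rcases Finset.eq_empty_or_nonempty 𝒯 with rfl | ⟨A, hA⟩
    · exact ih ∅ (by simp) (by simp)
    · set 𝒯' := 𝒯.erase A with h𝒯'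
      have hcard' : 𝒯'.card ≤ N := by
        have h1 : 𝒯'.card = 𝒯.card - 1 := by rw [h𝒯']; exact Finset.card_erase_of_mem hA
        have h2 := Finset.card_pos.mpr ⟨A, hA⟩
        omega
      have hins : 𝒯 = insert A 𝒯' := (Finset.insert_erase hA).symm
      have hsup : 𝒯.sup id = A ∪ 𝒯'.sup id := by
        rw [hins, Finset.sup_insert]; rfl
      set U := 𝒯'.sup id with hU
      have hI : True := trivial
      have hIcard : (𝒯'.image (fun S => A ∩ S)).card ≤ N := le_trans Finset.card_image_le hcard'
      have hIbind : ∀ S ∈ (𝒯'.image (fun S => A ∩ S)), IsBinding ν μ E S := by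
        intro S hS
        rcases Finset.mem_image.mp hS with ⟨B, hB, rfl⟩
        exact (binding_union_inter hμ hcap (hbind A hA)
          (hbind B (Finset.mem_of_mem_erase hB))).2
      have hAU : (𝒯'.image (fun S => A ∩ S)).sup id = A ∩ U := by
        ext j
        simp only [Finset.mem_sup, Finset.mem_image, id, Finset.mem_inter]
        constructor
        · rintro ⟨S, ⟨B, hB, rfl⟩, hj⟩
          exact ⟨(Finset.mem_inter.mp hj).1,
            Finset.mem_sup.mpr ⟨B, hB, (Finset.mem_inter.mp hj).2⟩⟩
        · rintro ⟨hjA, hjU⟩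
          rcases Finset.mem_sup.mp hjU with ⟨B, hB, hjB⟩
          exact ⟨A ∩ B, ⟨B, hB, rfl⟩, Finset.mem_inter.mpr ⟨hjA, hjB⟩⟩
      have h1 : indicatorVec A ∈
          Submodule.span ℝ {v : Fin m → ℝ | ∃ S, IsBinding ν μ E S ∧ v = indicatorVec S} :=
        Submodule.subset_span ⟨A, hbind A hA, rfl⟩
      have h2 := ih 𝒯' hcard' (fun S hS => hbind S (Finset.mem_of_mem_erase hS))
      have h3 := ih (𝒯'.image (fun S => A ∩ S)) hIcard hIbind
      rw [hAU] at h3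
      rw [hsup, indicator_union]
      exact Submodule.sub_mem _ (Submodule.add_mem _ h1 h2) h3

end Stmt0Aux

/-- under positivity, the capacity condition and equal totals, the span of the
binding-set indicators is spanned by the indicators of a disjoint cover `I₁, …, I_d` of `I`. -/
theorem stmt_0 {m n : ℕ} (hm : 1 ≤ m) (hn : 1 ≤ n)
    (ν : Fin m → ℝ) (μ : Fin n → ℝ) (E : Finset (Fin m × Fin n))
    (hν : ∀ i, 0 < ν i) (hμ : ∀ j, 0 < μ j)
    (hcap : capacityCond ν μ E) (htot : (∑ i, ν i) = ∑ j, μ j) :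
    ∃ (d : ℕ) (P : Fin d → Finset (Fin m)), 1 ≤ d ∧
      (∀ l, (P l).Nonempty) ∧
      (∀ l₁ l₂, l₁ ≠ l₂ → Disjoint (P l₁) (P l₂)) ∧
      (Finset.univ.biUnion P = Finset.univ) ∧
      Submodule.span ℝ {v : Fin m → ℝ | ∃ S, IsBinding ν μ E S ∧ v = indicatorVec S} =
        Submodule.span ℝ (Set.range fun l => indicatorVec (P l)) := by
  classical
  set SpanB := Submodule.span ℝ
      {v : Fin m → ℝ | ∃ S, IsBinding ν μ E S ∧ v = indicatorVec S} with hSpanB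
  -- the equivalence relation: same membership in every binding set
  set r : Fin m → Fin m → Prop :=
    fun i j => ∀ S, IsBinding ν μ E S → (i ∈ S ↔ j ∈ S) with hr
  set Q : Fin m → Finset (Fin m) := fun i => Finset.univ.filter (r i) with hQ
  have hmemQ : ∀ i j, j ∈ Q i ↔ r i j := by intro i j; simp [hQ]
  have hQself : ∀ i, i ∈ Q i := fun i => (hmemQ i i).2 (fun S _ => Iff.rfl)
  have hQeq : ∀ {i j}, r i j → Q i = Q j := by
    intro i j hij
    ext k
    rw [hmemQ, hmemQ]
    constructor
    · exact fun h S hS => ((hij S hS).symm.trans (h S hS))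
    · exact fun h S hS => ((hij S hS).trans (h S hS))
  -- minimal binding set containing i
  set ℬ : Finset (Finset (Fin m)) :=
    Finset.univ.filter (fun S => IsBinding ν μ E S) with hℬ
  set M : Fin m → Finset (Fin m) := fun i => (ℬ.filter (fun S => i ∈ S)).inf id with hM
  have hMmem : ∀ i j, j ∈ M i ↔ ∀ S, IsBinding ν μ E S → i ∈ S → j ∈ S := by
    intro i j
    rw [hM]
    simp only [mem_inf_iff, Finset.mem_filter, Finset.mem_univ, true_and, hℬ, and_imp]
  have hMbind : ∀ i, IsBinding ν μ E (M i) := by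
    intro i
    apply inf_binding hμ hcap htot
    intro S hS
    exact (Finset.mem_filter.mp ((Finset.mem_filter.mp hS).1)).2
  have hMself : ∀ i, i ∈ M i := fun i => (hMmem i i).2 (fun S _ h => h)
  -- each class indicator lies in the span of binding indicators
  have hQspan : ∀ i, indicatorVec (Q i) ∈ SpanB := by
    intro i
    set B := (M i \ Q i).biUnion M with hB
    have hBsub : B ⊆ M i := by
      intro j hj
      rcases Finset.mem_biUnion.mp hj with ⟨i', hi', hjM⟩
      have hi'M := (Finset.mem_sdiff.mp hi').1
      exact (hMmem i j).2 (fun S hS hiS =>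
        (hMmem i' j).mp hjM S hS ((hMmem i i').mp hi'M S hS hiS))
    have hQMB : Q i = M i \ B := by
      ext j
      rw [Finset.mem_sdiff, hmemQ]
      constructor
      · intro hrij
        refine ⟨(hMmem i j).2 (fun S hS hiS => (hrij S hS).mp hiS), ?_⟩
        intro hjB
        rcases Finset.mem_biUnion.mp hjB with ⟨i', hi', hjM⟩
        obtain ⟨hi'M, hi'Q⟩ := Finset.mem_sdiff.mp hi'
        rw [hmemQ] at hi'Q
        obtain ⟨S, hSn⟩ := not_forall.mp hi'Q
        obtain ⟨hS, hniff⟩ := Classical.not_imp.mp hSn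
        by_cases hiS : i ∈ S
        · exact hniff ⟨fun _ => (hMmem i i').mp hi'M S hS hiS, fun _ => hiS⟩
        · have hi'S : i' ∈ S := by
            by_contra hi'S
            exact hniff ⟨fun h => absurd h hiS, fun h => absurd h hi'S⟩
          have hjS : j ∈ S := (hMmem i' j).mp hjM S hS hi'S
          exact hiS ((hrij S hS).mpr hjS)
      · rintro ⟨hjM, hjB⟩
        by_contra hrij
        exact hjB (Finset.mem_biUnion.mpr
          ⟨j, Finset.mem_sdiff.mpr ⟨hjM, fun h => hrij ((hmemQ i j).mp h)⟩, hMself j⟩)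
    have hBsup : B = ((M i \ Q i).image M).sup id := by
      ext j
      rw [hB]
      simp only [Finset.mem_biUnion, Finset.mem_sup, Finset.mem_image, id]
      constructor
      · rintro ⟨i', hi', hj⟩; exact ⟨M i', ⟨i', hi', rfl⟩, hj⟩
      · rintro ⟨S, ⟨i', hi', rfl⟩, hj⟩; exact ⟨i', hi', hj⟩
    have hBspan : indicatorVec B ∈ SpanB := by
      rw [hBsup, hSpanB]
      apply sup_indicator_mem hμ hcap ((M i \ Q i).image M).card _ le_rfl
      intro S hS
      rcases Finset.mem_image.mp hS with ⟨i', _, rfl⟩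
      exact hMbind i'
    have hMspan : indicatorVec (M i) ∈ SpanB :=
      Submodule.subset_span ⟨M i, hMbind i, rfl⟩
    rw [hQMB, indicator_sdiff hBsub]
    exact Submodule.sub_mem _ hMspan hBspan
  -- construct the partition from the distinct classes
  set T : Finset (Finset (Fin m)) := Finset.univ.image Q with hT
  have hTne : T.Nonempty := ⟨Q ⟨0, hm⟩, Finset.mem_image_of_mem Q (Finset.mem_univ _)⟩
  set d := T.card with hd
  set e := T.equivFin with he
  set P : Fin d → Finset (Fin m) := fun l => (e.symm l : { x // x ∈ T }).1 with hP
  have hPinj : Function.Injective P := fun a b h => e.symm.injective (Subtype.ext h)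
  have hPrep : ∀ l, ∃ i, P l = Q i := by
    intro l
    rcases Finset.mem_image.mp (e.symm l).2 with ⟨i, _, hi⟩
    exact ⟨i, hi.symm⟩
  have hPall : ∀ i, ∃ l, P l = Q i := by
    intro i
    refine ⟨e ⟨Q i, Finset.mem_image_of_mem Q (Finset.mem_univ i)⟩, ?_⟩
    rw [hP]
    simp
  refine ⟨d, P, Finset.card_pos.mpr hTne, ?_, ?_, ?_, ?_⟩
  · intro l
    obtain ⟨i, hi⟩ := hPrep l
    exact ⟨i, hi ▸ hQself i⟩
  · intro l₁ l₂ hne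
    obtain ⟨i₁, h₁⟩ := hPrep l₁
    obtain ⟨i₂, h₂⟩ := hPrep l₂
    rw [Finset.disjoint_left, h₁, h₂]
    intro k hk₁ hk₂
    have : Q i₁ = Q i₂ := by
      rw [hQeq ((hmemQ i₁ k).mp hk₁), hQeq ((hmemQ i₂ k).mp hk₂)]
    exact hne (hPinj (by rw [h₁, h₂, this]))
  · apply Finset.eq_univ_of_forall
    intro i
    obtain ⟨l, hl⟩ := hPall i
    exact Finset.mem_biUnion.mpr ⟨l, Finset.mem_univ l, hl ▸ hQself i⟩
  · apply le_antisymm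
    · rw [Submodule.span_le]
      rintro v ⟨S, hS, rfl⟩
      have key : indicatorVec S
          = ∑ l ∈ Finset.univ.filter (fun l => P l ⊆ S), indicatorVec (P l) := by
        funext i
        rw [Finset.sum_apply]
        by_cases hiS : i ∈ S
        · obtain ⟨l₀, hl₀⟩ := hPall i
          have hQsub : Q i ⊆ S := fun k hk => ((hmemQ i k).mp hk S hS).mp hiS
          have hl₀mem : l₀ ∈ Finset.univ.filter (fun l => P l ⊆ S) :=
            Finset.mem_filter.mpr ⟨Finset.mem_univ _, hl₀ ▸ hQsub⟩
          rw [Finset.sum_eq_single_of_mem l₀ hl₀mem ?_]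
          · simp [indicatorVec, hl₀, hQself i, hiS]
          · intro l hl hne
            have hiP : i ∉ P l := by
              intro hiP
              obtain ⟨i', hPl⟩ := hPrep l
              have hq : Q i' = Q i := hQeq ((hmemQ i' i).mp (hPl ▸ hiP))
              exact hne (hPinj (by rw [hPl, hq, ← hl₀]))
            simp [indicatorVec, hiP]
        · rw [Finset.sum_eq_zero]
          · simp [indicatorVec, hiS]
          · intro l hl
            have hsub := (Finset.mem_filter.mp hl).2
            have : i ∉ P l := fun h => hiS (hsub h)
            simp [indicatorVec, this]
      rw [key]
      exact Submodule.sum_mem _ (fun l _ => Submodule.subset_span ⟨l, rfl⟩)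
    · rw [Submodule.span_le]
      rintro v ⟨l, rfl⟩
      obtain ⟨i, hPl⟩ := hPrep l
      show indicatorVec (P l) ∈ SpanB
      rw [hPl]
      exact hQspan i
end

section
/- For any ν ∈ ℝ_{≥0}^m, μ ∈ ℝ_{≥0}^n and E ⊆ I × J, the transportation polytope T_E(ν,μ) is nonempty if and only if ν satisfies the capacity condition for (μ,E) and ∑_{i∈I} ν_i = ∑_{j∈J} μ_j. -/
open scoped Classical

namespace Stmt1Aux

open Finset

variable {m n : ℕ}

lemma mem_nbr {E : Finset (Fin m × Fin n)} {S : Finset (Fin m)} {j : Fin n} :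
    j ∈ nbr E S ↔ ∃ i ∈ S, (i, j) ∈ E := by
  simp [nbr]

lemma nbr_mono {E : Finset (Fin m × Fin n)} {S T : Finset (Fin m)} (h : S ⊆ T) :
    nbr E S ⊆ nbr E T := by
  intro j hj
  rw [mem_nbr] at *
  obtain ⟨i, hi, he⟩ := hj
  exact ⟨i, h hi, he⟩

lemma nbr_union {E : Finset (Fin m × Fin n)} {S T : Finset (Fin m)} :
    nbr E (S ∪ T) = nbr E S ∪ nbr E T := by
  ext j
  simp only [mem_nbr, mem_union]
  constructor
  · rintro ⟨i, hi | hi, he⟩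
    · exact Or.inl ⟨i, hi, he⟩
    · exact Or.inr ⟨i, hi, he⟩
  · rintro (⟨i, hi, he⟩ | ⟨i, hi, he⟩)
    · exact ⟨i, Or.inl hi, he⟩
    · exact ⟨i, Or.inr hi, he⟩

lemma nbr_edges_mono {E F : Finset (Fin m × Fin n)} (h : F ⊆ E) (S : Finset (Fin m)) :
    nbr F S ⊆ nbr E S := by
  intro j hj
  rw [mem_nbr] at *
  obtain ⟨i, hi, he⟩ := hj
  exact ⟨i, hi, h he⟩

lemma nbr_erase_of_not_mem {E : Finset (Fin m × Fin n)} {i : Fin m} {j : Fin n}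
    {S : Finset (Fin m)} (hiS : i ∉ S) :
    nbr (E.erase (i, j)) S = nbr E S := by
  ext j'
  simp only [mem_nbr, Finset.mem_erase]
  constructor
  · rintro ⟨i', hi', _, he⟩
    exact ⟨i', hi', he⟩
  · rintro ⟨i', hi', he⟩
    refine ⟨i', hi', ?_, he⟩
    intro hEq
    exact hiS (by cases hEq; exact hi')

lemma nbr_subset_erase_union {E : Finset (Fin m × Fin n)} {i : Fin m} {j : Fin n}
    {S : Finset (Fin m)} :
    nbr E S ⊆ nbr (E.erase (i, j)) S ∪ {j} := by
  intro j' hj'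
  rw [mem_nbr] at hj'
  obtain ⟨i', hi', he⟩ := hj'
  by_cases hEq : (i', j') = (i, j)
  · simp [(Prod.mk.injEq _ _ _ _ ▸ hEq).2]
  · exact Finset.mem_union_left _ (mem_nbr.2 ⟨i', hi', Finset.mem_erase.2 ⟨hEq, he⟩⟩)

/-- Erasing an edge `(i,j)` across a tight set `S` (with `i ∉ S`, `j ∈ N(S)`) preserves
the capacity condition. -/
lemma capacity_erase {ν : Fin m → ℝ} {μ : Fin n → ℝ} {E : Finset (Fin m × Fin n)}
    (hμ : ∀ j, 0 ≤ μ j) (hcap : capacityCond ν μ E)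
    {i : Fin m} {j : Fin n} {S : Finset (Fin m)} (hiS : i ∉ S) (hjS : j ∈ nbr E S)
    (htight : ∑ k ∈ S, ν k = ∑ l ∈ nbr E S, μ l) :
    capacityCond ν μ (E.erase (i, j)) := by
  intro C
  set E' := E.erase (i, j) with hE'
  by_cases hiC : i ∈ C
  · have hNS : nbr E' S = nbr E S := nbr_erase_of_not_mem hiS
    have hjS' : j ∈ nbr E' S := hNS ▸ hjS
    -- nbr E (C ∪ S) = nbr E' (C ∪ S)
    have hN1 : nbr E (C ∪ S) = nbr E' (C ∪ S) := by
      apply Finset.Subset.antisymm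
      · intro j' hj'
        rcases Finset.mem_union.1 (nbr_subset_erase_union (i := i) (j := j) hj') with h | h
        · exact h
        · have : j' = j := by simpa using h
          subst this
          exact nbr_mono Finset.subset_union_right hjS'
      · exact nbr_edges_mono (Finset.erase_subset _ _) _
    have hsplit : ∑ k ∈ C ∪ S, ν k = (∑ k ∈ C, ν k) + ∑ k ∈ S \ C, ν k := by
      rw [← Finset.sum_union Finset.disjoint_sdiff]
      congr 1
      ext a
      simp only [Finset.mem_union, Finset.mem_sdiff]
      tauto
    have hcapCS := hcap (C ∪ S)
    rw [hN1, nbr_union] at hcapCS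
    have hNsplit : ∑ l ∈ nbr E' C ∪ nbr E' S, μ l
        = (∑ l ∈ nbr E' C, μ l) + ∑ l ∈ nbr E' S \ nbr E' C, μ l := by
      rw [← Finset.sum_union Finset.disjoint_sdiff]
      congr 1
      ext a
      simp only [Finset.mem_union, Finset.mem_sdiff]
      tauto
    -- key inequality: μ(N(S) \ N(C)) ≤ ν(S \ C)
    have hkey : ∑ l ∈ nbr E' S \ nbr E' C, μ l ≤ ∑ k ∈ S \ C, ν k := by
      have h1 : ∑ l ∈ nbr E' S \ nbr E' C, μ l
          = (∑ l ∈ nbr E' S, μ l) - ∑ l ∈ nbr E' S ∩ nbr E' C, μ l := by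
        have : nbr E' S \ nbr E' C = nbr E' S \ (nbr E' S ∩ nbr E' C) := by
          ext a; simp only [Finset.mem_sdiff, Finset.mem_inter]; tauto
        rw [this, Finset.sum_sdiff_eq_sub Finset.inter_subset_left]
      have h2 : ∑ k ∈ S \ C, ν k = (∑ k ∈ S, ν k) - ∑ k ∈ S ∩ C, ν k := by
        have : S \ C = S \ (S ∩ C) := by
          ext a; simp only [Finset.mem_sdiff, Finset.mem_inter]; tauto
        rw [this, Finset.sum_sdiff_eq_sub Finset.inter_subset_left]
      have h3 : ∑ k ∈ S ∩ C, ν k ≤ ∑ l ∈ nbr E' S ∩ nbr E' C, μ l := by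
        have hiSC : i ∉ S ∩ C := fun h => hiS (Finset.mem_inter.1 h).1
        calc ∑ k ∈ S ∩ C, ν k ≤ ∑ l ∈ nbr E (S ∩ C), μ l := hcap (S ∩ C)
          _ = ∑ l ∈ nbr E' (S ∩ C), μ l := by rw [nbr_erase_of_not_mem hiSC]
          _ ≤ ∑ l ∈ nbr E' S ∩ nbr E' C, μ l := by
              apply Finset.sum_le_sum_of_subset_of_nonneg
              · intro a ha
                exact Finset.mem_inter.2
                  ⟨nbr_mono Finset.inter_subset_left ha,
                   nbr_mono Finset.inter_subset_right ha⟩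
              · intro a _ _; exact hμ a
      have h4 : ∑ l ∈ nbr E' S, μ l = ∑ k ∈ S, ν k := by rw [hNS, ← htight]
      linarith
    linarith
  · rw [nbr_erase_of_not_mem hiC]
    exact hcap C

lemma polytope_mono {ν : Fin m → ℝ} {μ : Fin n → ℝ} {E F : Finset (Fin m × Fin n)}
    (h : F ⊆ E) : transportationPolytope ν μ F ⊆ transportationPolytope ν μ E := by
  rintro x ⟨h1, h2, h3, h4⟩
  exact ⟨h1, h2, h3, fun i j hij => h4 i j (fun hf => hij (h hf))⟩

/-- Lifting a solution of the reduced problem along edge `(i,j)` with flow `t`. -/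
lemma lift_solution {ν ν' : Fin m → ℝ} {μ μ' : Fin n → ℝ} {E F : Finset (Fin m × Fin n)}
    {i : Fin m} {j : Fin n} {t : ℝ} (ht : 0 ≤ t) (hij : (i, j) ∈ E) (hFE : F ⊆ E)
    (hν' : ∀ k, ν' k = ν k - if k = i then t else 0)
    (hμ' : ∀ l, μ' l = μ l - if l = j then t else 0)
    {x : Fin m → Fin n → ℝ} (hx : x ∈ transportationPolytope ν' μ' F) :
    (fun a b => x a b + if a = i ∧ b = j then t else 0) ∈ transportationPolytope ν μ E := by
  obtain ⟨hpos, hrow, hcol, hsupp⟩ := hx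
  refine ⟨?_, ?_, ?_, ?_⟩
  · intro a b
    have : (0 : ℝ) ≤ if a = i ∧ b = j then t else 0 := by split_ifs <;> simp [ht]
    exact add_nonneg (hpos a b) this
  · intro a
    rw [Finset.sum_add_distrib, hrow a]
    have hsum2 : ∑ b, (if a = i ∧ b = j then t else 0) = if a = i then t else 0 := by
      by_cases ha : a = i
      · simp only [ha, true_and]
        rw [Finset.sum_ite_eq' Finset.univ j (fun _ => t)]
        simp
      · simp [ha]
    rw [hsum2, hν' a]
    ring
  · intro b
    rw [Finset.sum_add_distrib, hcol b]
    have hsum2 : ∑ a, (if a = i ∧ b = j then t else 0) = if b = j then t else 0 := by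
      by_cases hb : b = j
      · simp only [hb, and_true]
        rw [Finset.sum_ite_eq' Finset.univ i (fun _ => t)]
        simp
      · simp [hb]
    rw [hsum2, hμ' b]
    ring
  · intro a b hab
    have hF : (a, b) ∉ F := fun hf => hab (hFE hf)
    have h2 : ¬(a = i ∧ b = j) := by
      rintro ⟨rfl, rfl⟩; exact hab hij
    simp only []
    rw [hsupp a b hF, if_neg h2, add_zero]

lemma zero_mem {ν : Fin m → ℝ} {μ : Fin n → ℝ} {E : Finset (Fin m × Fin n)}
    (hν : ∀ i, 0 ≤ ν i) (hμ : ∀ j, 0 ≤ μ j) (hsum : ∑ i, ν i = ∑ j, μ j)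
    (h0 : ∑ i, ν i = 0) :
    (fun _ _ => (0 : ℝ)) ∈ transportationPolytope ν μ E := by
  have hνz : ∀ i, ν i = 0 := fun i =>
    (Finset.sum_eq_zero_iff_of_nonneg (fun k _ => hν k)).1 h0 i (Finset.mem_univ i)
  have hμz : ∀ j, μ j = 0 := fun j =>
    (Finset.sum_eq_zero_iff_of_nonneg (fun k _ => hμ k)).1 (hsum ▸ h0) j (Finset.mem_univ j)
  exact ⟨fun _ _ => le_refl 0, fun i => by simp [hνz i], fun j => by simp [hμz j],
    fun _ _ _ => rfl⟩

lemma pos_filter_subset {ν ν' : Fin m → ℝ} (h : ∀ k, ν' k ≤ ν k) :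
    (Finset.univ.filter fun k => 0 < ν' k) ⊆ Finset.univ.filter fun k => 0 < ν k := by
  intro k hk
  rw [Finset.mem_filter] at *
  exact ⟨hk.1, lt_of_lt_of_le hk.2 (h k)⟩

/-- The key existence lemma (Gale's feasibility theorem), by strong induction on
`|E| + #{ν > 0} + #{μ > 0}`. -/
lemma key : ∀ (M : ℕ) (ν : Fin m → ℝ) (μ : Fin n → ℝ) (E : Finset (Fin m × Fin n)),
    E.card + (Finset.univ.filter fun i => 0 < ν i).card
      + (Finset.univ.filter fun j => 0 < μ j).card ≤ M →
    (∀ i, 0 ≤ ν i) → (∀ j, 0 ≤ μ j) → capacityCond ν μ E →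
    (∑ i, ν i) = ∑ j, μ j → (transportationPolytope ν μ E).Nonempty := by
  intro M
  induction M with
  | zero =>
    intro ν μ E hM hν hμ hcap hsum
    have hfilter : (Finset.univ.filter fun i => 0 < ν i) = ∅ := by
      rw [← Finset.card_eq_zero]; omega
    have h0 : ∑ i, ν i = 0 := by
      apply Finset.sum_eq_zero
      intro i _
      by_contra h
      have : i ∈ Finset.univ.filter fun i => 0 < ν i := by
        simp [lt_of_le_of_ne (hν i) (Ne.symm h)]
      rw [hfilter] at this
      exact absurd this (Finset.notMem_empty i)
    exact ⟨_, zero_mem hν hμ hsum h0⟩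
  | succ M IH =>
    intro ν μ E hM hν hμ hcap hsum
    by_cases h0 : ∑ i, ν i = 0
    · exact ⟨_, zero_mem hν hμ hsum h0⟩
    obtain ⟨i, hi⟩ : ∃ i, 0 < ν i := by
      by_contra h
      push_neg at h
      exact h0 (le_antisymm (Finset.sum_nonpos fun i _ => h i)
        (Finset.sum_nonneg fun i _ => hν i))
    have h1 : (0 : ℝ) < ∑ l ∈ nbr E {i}, μ l := by
      have := hcap {i}
      simp only [Finset.sum_singleton] at this
      linarith
    obtain ⟨j, hjmem, hj⟩ : ∃ j ∈ nbr E {i}, 0 < μ j := by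
      by_contra h
      push_neg at h
      exact absurd (Finset.sum_nonpos fun l hl => h l hl) (not_le.2 h1)
    have hijE : (i, j) ∈ E := by
      rw [mem_nbr] at hjmem
      obtain ⟨i', hi', he⟩ := hjmem
      rwa [Finset.mem_singleton.1 hi'] at he
    have hEcard : 1 ≤ E.card := Finset.card_pos.2 ⟨_, hijE⟩
    by_cases hT : ∃ S : Finset (Fin m), i ∉ S ∧ j ∈ nbr E S ∧
        ∑ k ∈ S, ν k = ∑ l ∈ nbr E S, μ l
    -- Case A: there is a tight set; erase the edge (i,j).
    · obtain ⟨S, hiS, hjS, htight⟩ := hT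
      have hcap' := capacity_erase hμ hcap hiS hjS htight
      have hmeas : (E.erase (i, j)).card + (Finset.univ.filter fun k => 0 < ν k).card
          + (Finset.univ.filter fun l => 0 < μ l).card ≤ M := by
        rw [Finset.card_erase_of_mem hijE]; omega
      obtain ⟨x, hx⟩ := IH ν μ (E.erase (i, j)) hmeas hν hμ hcap' hsum
      exact ⟨x, polytope_mono (Finset.erase_subset _ _) hx⟩
    -- Case B: no tight set avoiding i with j in its neighborhood.
    · set 𝒮 : Finset (Finset (Fin m)) :=
        Finset.univ.filter (fun S => i ∉ S ∧ j ∈ nbr E S) with h𝒮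
      set s : ℝ := if h : 𝒮.Nonempty
        then 𝒮.inf' h (fun S => (∑ l ∈ nbr E S, μ l) - ∑ k ∈ S, ν k) else ν i with hs
      set t : ℝ := min (ν i) (min (μ j) s) with ht
      have hslack : ∀ S ∈ 𝒮, 0 < (∑ l ∈ nbr E S, μ l) - ∑ k ∈ S, ν k := by
        intro S hS
        rw [h𝒮, Finset.mem_filter] at hS
        have hle := hcap S
        have hne : ∑ k ∈ S, ν k ≠ ∑ l ∈ nbr E S, μ l :=
          fun he => hT ⟨S, hS.2.1, hS.2.2, he⟩
        have := lt_of_le_of_ne hle hne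
        linarith
      have hspos : 0 < s := by
        rw [hs]
        split_ifs with h
        · rw [Finset.lt_inf'_iff]
          exact hslack
        · exact hi
      have htpos : 0 < t := lt_min hi (lt_min hj hspos)
      have htνi : t ≤ ν i := min_le_left _ _
      have htμj : t ≤ μ j := le_trans (min_le_right _ _) (min_le_left _ _)
      have htle : t ≤ s := le_trans (min_le_right _ _) (min_le_right _ _)
      set ν' : Fin m → ℝ := fun k => ν k - if k = i then t else 0 with hν'
      set μ' : Fin n → ℝ := fun l => μ l - if l = j then t else 0 with hμ'
      have hν'le : ∀ k, ν' k ≤ ν k := by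
        intro k; simp only [hν']; split_ifs <;> simp <;> linarith
      have hμ'le : ∀ l, μ' l ≤ μ l := by
        intro l; simp only [hμ']; split_ifs <;> simp <;> linarith
      have hν'nonneg : ∀ k, 0 ≤ ν' k := by
        intro k; simp only [hν']
        split_ifs with h
        · subst h; simp; linarith
        · simp [hν k]
      have hμ'nonneg : ∀ l, 0 ≤ μ' l := by
        intro l; simp only [hμ']
        split_ifs with h
        · subst h; simp; linarith
        · simp [hμ l]
      have sumS : ∀ S : Finset (Fin m),
          ∑ k ∈ S, ν' k = (∑ k ∈ S, ν k) - if i ∈ S then t else 0 := by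
        intro S
        simp only [hν']
        rw [Finset.sum_sub_distrib, Finset.sum_ite_eq' S i (fun _ => t)]
      have sumN : ∀ T : Finset (Fin n),
          ∑ l ∈ T, μ' l = (∑ l ∈ T, μ l) - if j ∈ T then t else 0 := by
        intro T
        simp only [hμ']
        rw [Finset.sum_sub_distrib, Finset.sum_ite_eq' T j (fun _ => t)]
      have hsum' : ∑ k, ν' k = ∑ l, μ' l := by
        rw [sumS, sumN]
        simp [hsum]
      have hcap' : capacityCond ν' μ' E := by
        intro S
        rw [sumS, sumN]
        have hc := hcap S
        by_cases hiS : i ∈ S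
        · have h2 : (if j ∈ nbr E S then t else 0) ≤ t := by
            split_ifs <;> linarith
          rw [if_pos hiS]
          linarith
        · rw [if_neg hiS]
          by_cases hjS : j ∈ nbr E S
          · have hSmem : S ∈ 𝒮 := by
              rw [h𝒮, Finset.mem_filter]
              exact ⟨Finset.mem_univ S, hiS, hjS⟩
            have hsle : s ≤ (∑ l ∈ nbr E S, μ l) - ∑ k ∈ S, ν k := by
              rw [hs, dif_pos ⟨S, hSmem⟩]
              exact Finset.inf'_le _ hSmem
            rw [if_pos hjS]
            linarith
          · rw [if_neg hjS]
            linarith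
      by_cases hcase : t = ν i ∨ t = μ j
      -- Case B1: a node is exhausted; recurse on (ν', μ', E).
      · have hmeas : E.card + (Finset.univ.filter fun k => 0 < ν' k).card
            + (Finset.univ.filter fun l => 0 < μ' l).card ≤ M := by
          have hν'sub := pos_filter_subset hν'le
          have hμ'sub := pos_filter_subset hμ'le
          rcases hcase with h | h
          · have hstrict : (Finset.univ.filter fun k => 0 < ν' k).card
                < (Finset.univ.filter fun k => 0 < ν k).card := by
              apply Finset.card_lt_card
              refine ⟨hν'sub, fun hcontra => ?_⟩
              have hi1 : i ∈ Finset.univ.filter fun k => 0 < ν k := by simp [hi]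
              have hi2 := hcontra hi1
              rw [Finset.mem_filter] at hi2
              have : ν' i = 0 := by simp only [hν']; simp [← h]
              rw [this] at hi2
              exact lt_irrefl 0 hi2.2
            have := Finset.card_le_card hμ'sub
            omega
          · have hstrict : (Finset.univ.filter fun l => 0 < μ' l).card
                < (Finset.univ.filter fun l => 0 < μ l).card := by
              apply Finset.card_lt_card
              refine ⟨hμ'sub, fun hcontra => ?_⟩
              have hj1 : j ∈ Finset.univ.filter fun l => 0 < μ l := by simp [hj]
              have hj2 := hcontra hj1
              rw [Finset.mem_filter] at hj2
              have : μ' j = 0 := by simp only [hμ']; simp [← h]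
              rw [this] at hj2
              exact lt_irrefl 0 hj2.2
            have := Finset.card_le_card hν'sub
            omega
        obtain ⟨x, hx⟩ := IH ν' μ' E hmeas hν'nonneg hμ'nonneg hcap' hsum'
        exact ⟨_, lift_solution htpos.le hijE (le_refl E)
          (fun k => rfl) (fun l => rfl) hx⟩
      -- Case B2: t = s and a set becomes tight; erase the edge (i,j) as well.
      · push_neg at hcase
        obtain ⟨hcν, hcμ⟩ := hcase
        have hts : t = s := by
          rcases min_choice (ν i) (min (μ j) s) with h | h
          · exact absurd (ht.trans h) hcν
          · rcases min_choice (μ j) s with h2 | h2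
            · exact absurd (ht.trans (h.trans h2)) hcμ
            · exact ht.trans (h.trans h2)
        have hne : 𝒮.Nonempty := by
          by_contra h
          rw [hs, dif_neg h] at hts
          exact hcν hts
        obtain ⟨S₀, hS₀mem, hS₀eq⟩ :=
          Finset.exists_mem_eq_inf' hne (fun S => (∑ l ∈ nbr E S, μ l) - ∑ k ∈ S, ν k)
        have hseq : s = (∑ l ∈ nbr E S₀, μ l) - ∑ k ∈ S₀, ν k := by
          rw [hs, dif_pos hne]; exact hS₀eq
        rw [h𝒮, Finset.mem_filter] at hS₀mem
        obtain ⟨-, hiS₀, hjS₀⟩ := hS₀mem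
        have htight' : ∑ k ∈ S₀, ν' k = ∑ l ∈ nbr E S₀, μ' l := by
          rw [sumS, sumN, if_neg hiS₀, if_pos hjS₀, hts, hseq]
          ring
        have hcap'' := capacity_erase hμ'nonneg hcap' hiS₀ hjS₀ htight'
        have hmeas : (E.erase (i, j)).card + (Finset.univ.filter fun k => 0 < ν' k).card
            + (Finset.univ.filter fun l => 0 < μ' l).card ≤ M := by
          have h1 := Finset.card_le_card (pos_filter_subset hν'le)
          have h2 := Finset.card_le_card (pos_filter_subset hμ'le)
          rw [Finset.card_erase_of_mem hijE]
          omega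
        obtain ⟨x, hx⟩ := IH ν' μ' (E.erase (i, j)) hmeas hν'nonneg hμ'nonneg hcap'' hsum'
        exact ⟨_, lift_solution htpos.le hijE (Finset.erase_subset _ _)
          (fun k => rfl) (fun l => rfl) hx⟩

end Stmt1Aux

/-- `T_E(ν,μ)` is nonempty iff `ν` satisfies the capacity condition for `(μ,E)`
and the totals are equal. -/
theorem stmt_1 {m n : ℕ} (hm : 1 ≤ m) (hn : 1 ≤ n)
    (ν : Fin m → ℝ) (μ : Fin n → ℝ) (E : Finset (Fin m × Fin n))
    (hν : ∀ i, 0 ≤ ν i) (hμ : ∀ j, 0 ≤ μ j) :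
    (transportationPolytope ν μ E).Nonempty ↔
      capacityCond ν μ E ∧ (∑ i, ν i) = ∑ j, μ j := by
  constructor
  · rintro ⟨x, hpos, hrow, hcol, hsupp⟩
    constructor
    · intro S
      have h1 : ∑ i ∈ S, ν i = ∑ i ∈ S, ∑ j, x i j :=
        Finset.sum_congr rfl fun i _ => (hrow i).symm
      rw [h1, Finset.sum_comm]
      have h2 : ∀ j ∈ (Finset.univ : Finset (Fin n)), j ∉ nbr E S →
          ∑ i ∈ S, x i j = 0 := by
        intro j _ hj
        apply Finset.sum_eq_zero
        intro i hi
        apply hsupp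
        intro he
        exact hj (Stmt1Aux.mem_nbr.2 ⟨i, hi, he⟩)
      rw [← Finset.sum_subset (Finset.subset_univ (nbr E S)) h2]
      apply Finset.sum_le_sum
      intro j hjmem
      rw [← hcol j]
      exact Finset.sum_le_sum_of_subset_of_nonneg (Finset.subset_univ S)
        (fun i _ _ => hpos i j)
    · calc ∑ i, ν i = ∑ i, ∑ j, x i j := Finset.sum_congr rfl fun i _ => (hrow i).symm
        _ = ∑ j, ∑ i, x i j := Finset.sum_comm
        _ = ∑ j, μ j := Finset.sum_congr rfl fun j _ => hcol j
  · rintro ⟨hcap, hsum⟩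
    exact Stmt1Aux.key (E.card + (Finset.univ.filter fun i => 0 < ν i).card
      + (Finset.univ.filter fun j => 0 < μ j).card) ν μ E (le_refl _) hν hμ hcap hsum
end

section
/- Suppose ν ∈ ℝ^m and μ ∈ ℝ^n have all entries strictly positive, T_E(ν,μ) is nonempty, and (ν,μ,E) does not satisfy the CRP condition. Then either the bipartite graph G(E) on I ⊔ J is not connected, or there exists a redundant edge, i.e., E_r ≠ ∅. -/
open scoped Classical

/-- if `T_E(ν,μ)` is nonempty and CRP fails, then either `G(E)` is disconnected
or there is a redundant edge. -/
theorem stmt_4 {m n : ℕ} (hm : 1 ≤ m) (hn : 1 ≤ n)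
    (ν : Fin m → ℝ) (μ : Fin n → ℝ) (E : Finset (Fin m × Fin n))
    (hν : ∀ i, 0 < ν i) (hμ : ∀ j, 0 < μ j)
    (hne : (transportationPolytope ν μ E).Nonempty)
    (hcrp : ¬ crpCond ν μ E) :
    ¬ (bipartiteGraph E).Connected ∨ redundantEdges ν μ E ≠ ∅ := by
  by_contra hcon
  push_neg at hcon
  obtain ⟨hconn, hred⟩ := hcon
  obtain ⟨x, hx0, hxr, hxc, hxE⟩ := hne
  -- total mass equality
  have htot : (∑ i, ν i) = ∑ j, μ j := by
    calc (∑ i, ν i) = ∑ i, ∑ j, x i j := by simp [hxr]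
    _ = ∑ j, ∑ i, x i j := Finset.sum_comm
    _ = ∑ j, μ j := by simp [hxc]
  -- key sum identity for any x' in the polytope and any S
  have key : ∀ x' ∈ transportationPolytope ν μ E, ∀ S : Finset (Fin m),
      ∑ i ∈ S, ν i = ∑ j ∈ nbr E S, ∑ i ∈ S, x' i j := by
    rintro x' ⟨h0, hr, hc, hE⟩ S
    have h1 : ∑ i ∈ S, ν i = ∑ j, ∑ i ∈ S, x' i j := by
      rw [← Finset.sum_comm]; simp [hr]
    rw [h1]
    refine (Finset.sum_subset (Finset.subset_univ _) ?_).symm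
    intro j _ hj
    refine Finset.sum_eq_zero fun i hi => hE i j fun hij => hj ?_
    simp [nbr]; exact ⟨i, hi, hij⟩
  have termwise : ∀ x' ∈ transportationPolytope ν μ E, ∀ S : Finset (Fin m),
      ∀ j, ∑ i ∈ S, x' i j ≤ μ j := by
    rintro x' ⟨h0, hr, hc, hE⟩ S j
    rw [← hc j]
    exact Finset.sum_le_sum_of_subset_of_nonneg (Finset.subset_univ S)
      (fun i _ _ => h0 i j)
  -- CRP failure gives a binding set
  rw [crpCond] at hcrp
  push_neg at hcrp
  obtain ⟨S, hSne, hSuniv, hSge⟩ := hcrp htot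
  have hcap : ∑ i ∈ S, ν i ≤ ∑ j ∈ nbr E S, μ j := by
    rw [key x ⟨hx0, hxr, hxc, hxE⟩ S]
    exact Finset.sum_le_sum fun j _ => termwise x ⟨hx0, hxr, hxc, hxE⟩ S j
  have hbind : ∑ i ∈ S, ν i = ∑ j ∈ nbr E S, μ j := le_antisymm hcap hSge
  -- for every point in the polytope, entries outside S into N(S) vanish
  have hzero : ∀ x' ∈ transportationPolytope ν μ E, ∀ i ∉ S, ∀ j ∈ nbr E S,
      x' i j = 0 := by
    intro x' hx' i hiS j hj
    obtain ⟨h0, hr, hc, hE⟩ := hx'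
    have heq : ∀ j' ∈ nbr E S, ∑ i ∈ S, x' i j' = μ j' := by
      have := (key x' ⟨h0, hr, hc, hE⟩ S).symm.trans hbind
      exact (Finset.sum_eq_sum_iff_of_le
        (fun j' _ => termwise x' ⟨h0, hr, hc, hE⟩ S j')).mp this
    have hsplit : ∑ i ∈ S, x' i j + ∑ i ∈ Sᶜ, x' i j = ∑ i, x' i j :=
      Finset.sum_add_sum_compl S _
    have hcompl : ∑ i ∈ Sᶜ, x' i j = 0 := by
      have := heq j hj
      rw [this, hc j] at hsplit
      linarith
    have := (Finset.sum_eq_zero_iff_of_nonneg (fun i _ => h0 i j)).mp hcompl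
    exact this i (Finset.mem_compl.mpr hiS)
  by_cases hEx : ∃ i j, (i, j) ∈ E ∧ i ∉ S ∧ j ∈ nbr E S
  · -- redundant edge exists
    obtain ⟨i, j, hij, hiS, hj⟩ := hEx
    have : (i, j) ∈ redundantEdges ν μ E := by
      rw [redundantEdges, Finset.mem_filter]
      exact ⟨hij, fun x' hx' => hzero x' hx' i hiS j hj⟩
    rw [hred] at this
    exact absurd this (Finset.notMem_empty _)
  · -- graph is disconnected
    push_neg at hEx
    set f : (Fin m ⊕ Fin n) → Prop :=
      Sum.elim (fun i => i ∈ S) (fun j => j ∈ nbr E S) with hf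
    have hadj : ∀ u v, (bipartiteGraph E).Adj u v → (f u ↔ f v) := by
      intro u v huv
      rw [bipartiteGraph, SimpleGraph.fromRel_adj] at huv
      obtain ⟨-, ⟨i, j, rfl, rfl, hij⟩ | ⟨i, j, rfl, rfl, hij⟩⟩ := huv
      · by_cases hiS : i ∈ S
        · have : j ∈ nbr E S := by
            simp [nbr]; exact ⟨i, hiS, hij⟩
          simp [hf, hiS, this]
        · have : j ∉ nbr E S := hEx i j hij hiS
          simp [hf, hiS, this]
      · by_cases hiS : i ∈ S
        · have : j ∈ nbr E S := by
            simp [nbr]; exact ⟨i, hiS, hij⟩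
          simp [hf, hiS, this]
        · have : j ∉ nbr E S := hEx i j hij hiS
          simp [hf, hiS, this]
    have hreach : ∀ u v, (bipartiteGraph E).Reachable u v → (f u ↔ f v) := by
      intro u v ⟨w⟩
      induction w with
      | nil => rfl
      | cons h p ih => exact (hadj _ _ h).trans ih
    obtain ⟨i₀, hi₀⟩ := hSne
    have hex : ∃ i, i ∉ S := by
      by_contra h
      push_neg at h
      exact hSuniv (Finset.eq_univ_iff_forall.mpr h)
    obtain ⟨i₁, hi₁⟩ := hex
    have := hreach _ _ (hconn.preconnected (Sum.inl i₀) (Sum.inl i₁))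
    simp only [hf, Sum.elim_inl] at this
    exact hi₁ (this.mp hi₀)
end

section
/- Suppose ν ∈ ℝ^m and μ ∈ ℝ^n have all entries strictly positive and T_E(ν,μ) is nonempty. Then (i) for every x ∈ T_E(ν,μ), the number of connected components of the support graph G(B(x)) is at least the ERP number of T_E(ν,μ); and (ii) there exists x ∈ T_E(ν,μ) such that the number of connected components of G(B(x)) equals the ERP number of T_E(ν,μ). -/
open scoped Classical

/-! The support of a point of `T_E(ν,μ)` avoids the redundant edges, so `G(B(x))` is a subgraph of
`G(E ∖ E_r)` and has at least as many components. Conversely, every non-redundant edge is positive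
at some point of the polytope, and since the polytope is convex and nonnegative, a convex
combination of these finitely many points has support exactly `E ∖ E_r`. -/

section

variable {m n : ℕ}

lemma bipartiteGraph_mono {F F' : Finset (Fin m × Fin n)} (h : F ⊆ F') :
    bipartiteGraph F ≤ bipartiteGraph F' := by
  rintro u v ⟨hne, hrel⟩
  exact ⟨hne, hrel.imp (fun ⟨i, j, hu, hv, hij⟩ => ⟨i, j, hu, hv, h hij⟩)
    (fun ⟨i, j, hu, hv, hij⟩ => ⟨i, j, hu, hv, h hij⟩)⟩

lemma numComponents_anti {F F' : Finset (Fin m × Fin n)} (h : F ⊆ F') :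
    numComponents F' ≤ numComponents F :=
  SimpleGraph.ConnectedComponent.card_le_card_of_le (bipartiteGraph_mono h)

end

lemma Convex.exists_forall_pos_of_forall_exists_pos {V ι : Type*} [AddCommGroup V]
    [Module ℝ V] {K : Set V} (hK : Convex ℝ K) (hKne : K.Nonempty)
    (f : ι → V →ₗ[ℝ] ℝ) (hf : ∀ x ∈ K, ∀ i, 0 ≤ f i x)
    (s : Finset ι) (hs : ∀ i ∈ s, ∃ x ∈ K, 0 < f i x) :
    ∃ x ∈ K, ∀ i ∈ s, 0 < f i x := by
  classical
  induction s using Finset.induction_on with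
  | empty =>
    obtain ⟨x, hx⟩ := hKne
    exact ⟨x, hx, by simp⟩
  | insert a s _ ih =>
    obtain ⟨x, hxK, hx⟩ := ih fun i hi => hs i (Finset.mem_insert_of_mem hi)
    obtain ⟨y, hyK, hy⟩ := hs a (Finset.mem_insert_self a s)
    have hmid : (1 / 2 : ℝ) • x + (1 / 2 : ℝ) • y ∈ K :=
      hK hxK hyK (by norm_num) (by norm_num) (by norm_num)
    refine ⟨_, hmid, fun i hi => ?_⟩
    have hxi := hf x hxK i
    have hyi := hf y hyK i
    simp only [map_add, map_smul, smul_eq_mul]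
    rcases Finset.mem_insert.mp hi with rfl | hi
    · linarith
    · linarith [hx i hi]

section

variable {m n : ℕ} {ν : Fin m → ℝ} {μ : Fin n → ℝ} {E : Finset (Fin m × Fin n)}

lemma convex_transportationPolytope : Convex ℝ (transportationPolytope ν μ E) := by
  rintro x ⟨hx0, hxν, hxμ, hxE⟩ y ⟨hy0, hyν, hyμ, hyE⟩ a b ha hb hab
  refine ⟨fun i j => ?_, fun i => ?_, fun j => ?_, fun i j hij => ?_⟩ <;>
    simp only [Pi.add_apply, Pi.smul_apply, smul_eq_mul, Finset.sum_add_distrib,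
      ← Finset.mul_sum]
  · have := hx0 i j; have := hy0 i j; positivity
  · rw [hxν, hyν, ← add_mul, hab, one_mul]
  · rw [hxμ, hyμ, ← add_mul, hab, one_mul]
  · rw [hxE i j hij, hyE i j hij, mul_zero, mul_zero, add_zero]

lemma supportEdges_subset_sdiff_redundantEdges {x : Fin m → Fin n → ℝ}
    (hx : x ∈ transportationPolytope ν μ E) :
    supportEdges E x ⊆ E \ redundantEdges ν μ E := by
  intro e he
  simp only [supportEdges, Finset.mem_filter] at he
  simp only [redundantEdges, Finset.mem_sdiff, Finset.mem_filter, not_and]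
  exact ⟨he.1, fun _ hr => (hr x hx).not_gt he.2⟩

lemma exists_supportEdges_eq_sdiff_redundantEdges
    (hne : (transportationPolytope ν μ E).Nonempty) :
    ∃ x ∈ transportationPolytope ν μ E, supportEdges E x = E \ redundantEdges ν μ E := by
  let coord : Fin m × Fin n → (Fin m → Fin n → ℝ) →ₗ[ℝ] ℝ :=
    fun e => LinearMap.proj e.2 ∘ₗ LinearMap.proj (R := ℝ) (φ := fun _ => Fin n → ℝ) e.1
  have hcoord_nonneg : ∀ x ∈ transportationPolytope ν μ E, ∀ e, 0 ≤ coord e x :=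
    fun x hx e => hx.1 e.1 e.2
  have hcoord_pos : ∀ e ∈ E \ redundantEdges ν μ E,
      ∃ x ∈ transportationPolytope ν μ E, 0 < coord e x := by
    intro e he
    simp only [redundantEdges, Finset.mem_sdiff, Finset.mem_filter, not_and, not_forall] at he
    obtain ⟨x, hx, hxe⟩ := he.2 he.1
    exact ⟨x, hx, (hx.1 e.1 e.2).lt_of_ne' hxe⟩
  obtain ⟨x, hx, hpos⟩ :=
    convex_transportationPolytope.exists_forall_pos_of_forall_exists_pos
      hne coord hcoord_nonneg _ hcoord_pos
  refine ⟨x, hx, (supportEdges_subset_sdiff_redundantEdges hx).antisymm fun e he => ?_⟩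
  exact Finset.mem_filter.mpr ⟨Finset.sdiff_subset he, hpos e he⟩

end

theorem stmt_5_general {m n : ℕ}
    (ν : Fin m → ℝ) (μ : Fin n → ℝ) (E : Finset (Fin m × Fin n))
    (hne : (transportationPolytope ν μ E).Nonempty) :
    (∀ x ∈ transportationPolytope ν μ E,
      erpNumber ν μ E ≤ numComponents (supportEdges E x)) ∧
    (∃ x ∈ transportationPolytope ν μ E,
      numComponents (supportEdges E x) = erpNumber ν μ E) := by
  refine ⟨fun x hx => numComponents_anti (supportEdges_subset_sdiff_redundantEdges hx), ?_⟩
  obtain ⟨x, hx, hsupp⟩ := exists_supportEdges_eq_sdiff_redundantEdges hne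
  exact ⟨x, hx, by rw [hsupp, erpNumber]⟩

/-- every support graph has at least ERP-number many connected components, and
some `x ∈ T_E(ν,μ)` achieves exactly the ERP number. -/
theorem stmt_5 {m n : ℕ} (hm : 1 ≤ m) (hn : 1 ≤ n)
    (ν : Fin m → ℝ) (μ : Fin n → ℝ) (E : Finset (Fin m × Fin n))
    (hν : ∀ i, 0 < ν i) (hμ : ∀ j, 0 < μ j)
    (hne : (transportationPolytope ν μ E).Nonempty) :
    (∀ x ∈ transportationPolytope ν μ E,
      erpNumber ν μ E ≤ numComponents (supportEdges E x)) ∧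
    (∃ x ∈ transportationPolytope ν μ E,
      numComponents (supportEdges E x) = erpNumber ν μ E) :=
  stmt_5_general ν μ E hne
end

section
/- Suppose ν ∈ ℝ^m and μ ∈ ℝ^n have all entries strictly positive and T_E(ν,μ) is nonempty. Let d be the ERP number of T_E(ν,μ) and let I_1,…,I_d be the intersections with I of the vertex sets of the connected components of G(E ∖ E_r). Then the I_l are nonempty and pairwise disjoint with union I, and the linear span in ℝ^m of {𝟙_S : S ⊆ I binding} equals the linear span of {𝟙_{I_1},…,𝟙_{I_d}}; in particular, the dimension of this span equals the ERP number d. -/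
open scoped Classical

noncomputable section Stmt6Aux
open Finset

variable {m n : ℕ}

lemma mem_transport {ν : Fin m → ℝ} {μ : Fin n → ℝ} {E : Finset (Fin m × Fin n)}
    {x : Fin m → Fin n → ℝ} :
    x ∈ transportationPolytope ν μ E ↔
      (∀ i j, 0 ≤ x i j) ∧ (∀ i, ∑ j, x i j = ν i) ∧
      (∀ j, ∑ i, x i j = μ j) ∧ ∀ i j, (i, j) ∉ E → x i j = 0 := Iff.rfl

lemma redundant_zero {ν : Fin m → ℝ} {μ : Fin n → ℝ} {E : Finset (Fin m × Fin n)}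
    {x : Fin m → Fin n → ℝ} (hx : x ∈ transportationPolytope ν μ E)
    {i : Fin m} {j : Fin n} (h : (i, j) ∈ redundantEdges ν μ E) : x i j = 0 := by
  rw [redundantEdges, mem_filter] at h
  exact h.2 x hx

lemma support_mem {ν : Fin m → ℝ} {μ : Fin n → ℝ} {E : Finset (Fin m × Fin n)}
    {x : Fin m → Fin n → ℝ} (hx : x ∈ transportationPolytope ν μ E)
    {i : Fin m} {j : Fin n} (h : x i j ≠ 0) : (i, j) ∈ E \ redundantEdges ν μ E := by
  rw [mem_sdiff]
  refine ⟨?_, fun hr => h (redundant_zero hx hr)⟩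
  by_contra hE
  exact h (hx.2.2.2 i j hE)

lemma exists_xbar {ν : Fin m → ℝ} {μ : Fin n → ℝ} {E : Finset (Fin m × Fin n)}
    (hne : (transportationPolytope ν μ E).Nonempty) :
    ∃ x ∈ transportationPolytope ν μ E,
      ∀ e ∈ E \ redundantEdges ν μ E, 0 < x e.1 e.2 := by
  classical
  obtain ⟨x₀, hx₀⟩ := hne
  set F := E \ redundantEdges ν μ E with hF
  have key : ∀ e : Fin m × Fin n, ∃ x, x ∈ transportationPolytope ν μ E ∧
      (e ∈ F → 0 < x e.1 e.2) := by
    intro e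
    by_cases he : e ∈ F
    · have h1 : e ∈ E := (mem_sdiff.mp he).1
      have h2 : e ∉ redundantEdges ν μ E := (mem_sdiff.mp he).2
      rw [redundantEdges, mem_filter] at h2
      push_neg at h2
      obtain ⟨x, hx, hxe⟩ := h2 h1
      exact ⟨x, hx, fun _ => lt_of_le_of_ne (hx.1 e.1 e.2) (Ne.symm hxe)⟩
    · exact ⟨x₀, hx₀, fun h => absurd h he⟩
  choose g hg1 hg2 using key
  set k : ℝ := (F.card : ℝ) + 1 with hk
  have hkpos : 0 < k := by positivity
  refine ⟨fun i j => (x₀ i j + ∑ e ∈ F, g e i j) / k, ⟨?_, ?_, ?_, ?_⟩, ?_⟩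
  · intro i j
    apply div_nonneg _ hkpos.le
    have := hx₀.1 i j
    have h2 : 0 ≤ ∑ e ∈ F, g e i j := sum_nonneg fun e _ => (hg1 e).1 i j
    linarith
  · intro i
    rw [← Finset.sum_div, Finset.sum_add_distrib, hx₀.2.1 i, Finset.sum_comm]
    have : ∀ e ∈ F, ∑ j, g e i j = ν i := fun e _ => (hg1 e).2.1 i
    rw [Finset.sum_congr rfl this, Finset.sum_const, nsmul_eq_mul]
    field_simp [hk]
    ring
  · intro j
    rw [← Finset.sum_div, Finset.sum_add_distrib, hx₀.2.2.1 j, Finset.sum_comm]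
    have : ∀ e ∈ F, ∑ i, g e i j = μ j := fun e _ => (hg1 e).2.2.1 j
    rw [Finset.sum_congr rfl this, Finset.sum_const, nsmul_eq_mul]
    field_simp [hk]
    ring
  · intro i j hij
    show (x₀ i j + ∑ e ∈ F, g e i j) / k = 0
    rw [hx₀.2.2.2 i j hij]
    have : ∀ e ∈ F, g e i j = 0 := fun e _ => (hg1 e).2.2.2 i j hij
    rw [Finset.sum_congr rfl this, Finset.sum_const_zero]
    simp
  · intro e he
    show 0 < (x₀ e.1 e.2 + ∑ e' ∈ F, g e' e.1 e.2) / k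
    apply div_pos _ hkpos
    have h1 : 0 < g e e.1 e.2 := hg2 e he
    have h2 : 0 ≤ ∑ e' ∈ F, g e' e.1 e.2 := sum_nonneg fun e' _ => (hg1 e').1 e.1 e.2
    have h3 : g e e.1 e.2 ≤ ∑ e' ∈ F, g e' e.1 e.2 :=
      Finset.single_le_sum (fun e' _ => (hg1 e').1 e.1 e.2) he
    have := hx₀.1 e.1 e.2
    linarith

lemma bipartiteGraph_adj {F : Finset (Fin m × Fin n)} {u v : Fin m ⊕ Fin n} :
    (bipartiteGraph F).Adj u v ↔
      ∃ i j, (i, j) ∈ F ∧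
        ((u = Sum.inl i ∧ v = Sum.inr j) ∨ (u = Sum.inr j ∧ v = Sum.inl i)) := by
  rw [bipartiteGraph, SimpleGraph.fromRel_adj]
  constructor
  · rintro ⟨hne, h | h⟩ <;> obtain ⟨i, j, hu, hv, hFij⟩ := h
    · exact ⟨i, j, hFij, Or.inl ⟨hu, hv⟩⟩
    · exact ⟨i, j, hFij, Or.inr ⟨hv, hu⟩⟩
  · rintro ⟨i, j, hFij, ⟨hu, hv⟩ | ⟨hu, hv⟩⟩
    · subst hu; subst hv; exact ⟨by simp, Or.inl ⟨i, j, rfl, rfl, hFij⟩⟩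
    · subst hu; subst hv; exact ⟨by simp, Or.inr ⟨i, j, rfl, rfl, hFij⟩⟩

lemma mem_nbr {F : Finset (Fin m × Fin n)} {S : Finset (Fin m)} {j : Fin n} :
    j ∈ nbr F S ↔ ∃ i ∈ S, (i, j) ∈ F := by
  simp [nbr]

lemma mk_eq_of_mem_F {F : Finset (Fin m × Fin n)} {i : Fin m} {j : Fin n}
    (h : (i, j) ∈ F) :
    (bipartiteGraph F).connectedComponentMk (Sum.inl i) =
      (bipartiteGraph F).connectedComponentMk (Sum.inr j) :=
  SimpleGraph.ConnectedComponent.sound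
    (SimpleGraph.Adj.reachable (bipartiteGraph_adj.mpr ⟨i, j, h, Or.inl ⟨rfl, rfl⟩⟩))

/-- auxiliary: row indicator of a vertex -/
def vrow (u : Fin m ⊕ Fin n) : Fin m → ℝ := fun i => if u = Sum.inl i then 1 else 0

/-- auxiliary: column indicator of a vertex -/
def vcol (u : Fin m ⊕ Fin n) : Fin n → ℝ := fun j => if u = Sum.inr j then 1 else 0

/-- auxiliary: a matrix unit -/
def unitMat (i₀ : Fin m) (j₀ : Fin n) : Fin m → Fin n → ℝ :=
  fun i j => if i = i₀ ∧ j = j₀ then 1 else 0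

lemma vrow_inl {i₀ i : Fin m} :
    vrow (Sum.inl i₀ : Fin m ⊕ Fin n) i = if i = i₀ then 1 else 0 := by
  unfold vrow
  by_cases h : i = i₀
  · simp [h]
  · simp [h, Ne.symm h]

lemma vrow_inr {j₀ : Fin n} {i : Fin m} :
    vrow (Sum.inr j₀ : Fin m ⊕ Fin n) i = 0 := by simp [vrow]

lemma vcol_inr {j₀ j : Fin n} :
    vcol (Sum.inr j₀ : Fin m ⊕ Fin n) j = if j = j₀ then 1 else 0 := by
  unfold vcol
  by_cases h : j = j₀
  · simp [h]
  · simp [h, Ne.symm h]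

lemma vcol_inl {i₀ : Fin m} {j : Fin n} :
    vcol (Sum.inl i₀ : Fin m ⊕ Fin n) j = 0 := by simp [vcol]

lemma unitMat_row (i₀ : Fin m) (j₀ : Fin n) (i : Fin m) :
    ∑ j, unitMat i₀ j₀ i j = if i = i₀ then 1 else 0 := by
  unfold unitMat
  by_cases h : i = i₀ <;> simp [h]

lemma unitMat_col (i₀ : Fin m) (j₀ : Fin n) (j : Fin n) :
    ∑ i, unitMat i₀ j₀ i j = if j = j₀ then 1 else 0 := by
  unfold unitMat
  by_cases h : j = j₀ <;> simp [h]

lemma unitMat_nonneg (i₀ : Fin m) (j₀ : Fin n) (i : Fin m) (j : Fin n) :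
    0 ≤ unitMat i₀ j₀ i j := by unfold unitMat; positivity

lemma unitMat_eq_zero {i₀ : Fin m} {j₀ : Fin n} {i : Fin m} {j : Fin n}
    (h : (i, j) ≠ (i₀, j₀)) : unitMat i₀ j₀ i j = 0 := by
  unfold unitMat
  rw [if_neg]
  rintro ⟨h1, h2⟩
  exact h (by rw [h1, h2])

/-- The directed "superreachability": edges of `G(E∖E_r)` in both directions,
and arbitrary edges of `E` in the demand-to-supply direction. -/
def reach' (ν : Fin m → ℝ) (μ : Fin n → ℝ) (E : Finset (Fin m × Fin n)) :
    (Fin m ⊕ Fin n) → (Fin m ⊕ Fin n) → Prop :=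
  Relation.ReflTransGen (fun u v =>
    (bipartiteGraph (E \ redundantEdges ν μ E)).Adj u v ∨
    ∃ i j, u = Sum.inl i ∧ v = Sum.inr j ∧ (i, j) ∈ E)

lemma exists_flow {ν : Fin m → ℝ} {μ : Fin n → ℝ} {E : Finset (Fin m × Fin n)}
    {u v : Fin m ⊕ Fin n} (h : reach' ν μ E u v) :
    ∃ z : Fin m → Fin n → ℝ,
      (∀ i, ∑ j, z i j = vrow u i - vrow v i) ∧
      (∀ j, ∑ i, z i j = vcol v j - vcol u j) ∧
      (∀ i j, z i j ≠ 0 → (i, j) ∈ E) ∧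
      (∀ i j, z i j < 0 → (i, j) ∈ E \ redundantEdges ν μ E) := by
  induction h using Relation.ReflTransGen.head_induction_on with
  | refl =>
      exact ⟨fun _ _ => 0, by simp, by simp, by simp, by simp⟩
  | head hstep _ ih =>
      rename_i a c _
      obtain ⟨z, hzr, hzc, hzE, hzF⟩ := ih
      have hcase : (∃ i j, (i, j) ∈ E ∧ a = Sum.inl i ∧ c = Sum.inr j) ∨
          (∃ i j, (i, j) ∈ E \ redundantEdges ν μ E ∧ a = Sum.inr j ∧ c = Sum.inl i) := by
        rcases hstep with hadj | ⟨i, j, ha, hc, hE⟩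
        · rw [bipartiteGraph_adj] at hadj
          obtain ⟨i, j, hF, ⟨ha, hc⟩ | ⟨ha, hc⟩⟩ := hadj
          · exact Or.inl ⟨i, j, (mem_sdiff.mp hF).1, ha, hc⟩
          · exact Or.inr ⟨i, j, hF, ha, hc⟩
        · exact Or.inl ⟨i, j, hE, ha, hc⟩
      rcases hcase with ⟨i₀, j₀, hE₀, ha, hc⟩ | ⟨i₀, j₀, hF₀, ha, hc⟩
      · subst ha; subst hc
        refine ⟨fun i j => z i j + unitMat i₀ j₀ i j, ?_, ?_, ?_, ?_⟩
        · intro i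
          rw [Finset.sum_add_distrib, hzr i, unitMat_row, vrow_inr, vrow_inl]
          ring
        · intro j
          rw [Finset.sum_add_distrib, hzc j, unitMat_col, vcol_inl, vcol_inr]
          ring
        · intro i j hij
          have hij' : z i j + unitMat i₀ j₀ i j ≠ 0 := hij
          by_cases h : (i, j) = (i₀, j₀)
          · injection h with h1 h2; subst h1; subst h2; exact hE₀
          · rw [unitMat_eq_zero h, add_zero] at hij'
            exact hzE i j hij'
        · intro i j hij
          have hij' : z i j + unitMat i₀ j₀ i j < 0 := hij
          have hu := unitMat_nonneg i₀ j₀ i j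
          exact hzF i j (by linarith)
      · subst ha; subst hc
        refine ⟨fun i j => z i j - unitMat i₀ j₀ i j, ?_, ?_, ?_, ?_⟩
        · intro i
          rw [Finset.sum_sub_distrib, hzr i, unitMat_row, vrow_inr, vrow_inl]
          ring
        · intro j
          rw [Finset.sum_sub_distrib, hzc j, unitMat_col, vcol_inl, vcol_inr]
          ring
        · intro i j hij
          have hij' : z i j - unitMat i₀ j₀ i j ≠ 0 := hij
          by_cases h : (i, j) = (i₀, j₀)
          · injection h with h1 h2; subst h1; subst h2; exact (mem_sdiff.mp hF₀).1
          · rw [unitMat_eq_zero h, sub_zero] at hij'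
            exact hzE i j hij'
        · intro i j hij
          have hij' : z i j - unitMat i₀ j₀ i j < 0 := hij
          by_cases h : z i j < 0
          · exact hzF i j h
          · push_neg at h
            by_cases he : (i, j) = (i₀, j₀)
            · injection he with h1 h2; subst h1; subst h2; exact hF₀
            · rw [unitMat_eq_zero he] at hij'
              linarith
lemma exists_col_entry {ν : Fin m → ℝ} {μ : Fin n → ℝ} {E : Finset (Fin m × Fin n)}
    {x : Fin m → Fin n → ℝ} (hx : x ∈ transportationPolytope ν μ E)
    {j : Fin n} (hμj : 0 < μ j) : ∃ i, (i, j) ∈ E \ redundantEdges ν μ E := by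
  have hex : ∃ i, x i j ≠ 0 := by
    by_contra hc
    push_neg at hc
    have h0 := hx.2.2.1 j
    rw [Finset.sum_eq_zero (fun i _ => hc i)] at h0
    linarith
  obtain ⟨i, hi⟩ := hex
  exact ⟨i, support_mem hx hi⟩

lemma exists_row_entry {ν : Fin m → ℝ} {μ : Fin n → ℝ} {E : Finset (Fin m × Fin n)}
    {x : Fin m → Fin n → ℝ} (hx : x ∈ transportationPolytope ν μ E)
    {i : Fin m} (hνi : 0 < ν i) : ∃ j, (i, j) ∈ E \ redundantEdges ν μ E := by
  have hex : ∃ j, x i j ≠ 0 := by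
    by_contra hc
    push_neg at hc
    have h0 := hx.2.1 i
    rw [Finset.sum_eq_zero (fun j _ => hc j)] at h0
    linarith
  obtain ⟨j, hj⟩ := hex
  exact ⟨j, support_mem hx hj⟩

lemma mem_F_of_reach' {ν : Fin m → ℝ} {μ : Fin n → ℝ} {E : Finset (Fin m × Fin n)}
    (hne : (transportationPolytope ν μ E).Nonempty)
    (hFne : (E \ redundantEdges ν μ E).Nonempty)
    {i : Fin m} {j : Fin n} (hij : (i, j) ∈ E)
    (h : reach' ν μ E (Sum.inr j) (Sum.inl i)) :
    (i, j) ∈ E \ redundantEdges ν μ E := by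
  by_contra hF
  have hred : (i, j) ∈ redundantEdges ν μ E := by
    rw [Finset.mem_sdiff] at hF
    push_neg at hF
    exact hF hij
  obtain ⟨z, hzr, hzc, hzE, hzF⟩ := exists_flow h
  obtain ⟨xb, hxb, hxbpos⟩ := exists_xbar hne
  set w : Fin m → Fin n → ℝ := fun i' j' => z i' j' + unitMat i j i' j' with hw
  have hwr : ∀ i', ∑ j', w i' j' = 0 := by
    intro i'
    rw [hw]
    rw [Finset.sum_add_distrib, hzr i', unitMat_row, vrow_inr, vrow_inl]
    ring
  have hwc : ∀ j', ∑ i', w i' j' = 0 := by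
    intro j'
    rw [hw]
    rw [Finset.sum_add_distrib, hzc j', unitMat_col, vcol_inl, vcol_inr]
    ring
  have hwE : ∀ i' j', w i' j' ≠ 0 → (i', j') ∈ E := by
    intro i' j' hne'
    have hne2 : z i' j' + unitMat i j i' j' ≠ 0 := hne'
    by_cases hc : (i', j') = (i, j)
    · injection hc with h1 h2; subst h1; subst h2; exact hij
    · rw [unitMat_eq_zero hc, add_zero] at hne2
      exact hzE i' j' hne2
  have hwF : ∀ i' j', w i' j' < 0 → (i', j') ∈ E \ redundantEdges ν μ E := by
    intro i' j' hlt
    have hlt2 : z i' j' + unitMat i j i' j' < 0 := hlt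
    have hu := unitMat_nonneg i j i' j'
    exact hzF i' j' (by linarith)
  have hwpos : (1 : ℝ) ≤ w i j := by
    have hz0 : ¬ z i j < 0 := fun hlt => hF (hzF i j hlt)
    push_neg at hz0
    have hu : unitMat i j i j = 1 := by unfold unitMat; simp
    show (1 : ℝ) ≤ z i j + unitMat i j i j
    rw [hu]; linarith
  set M : ℝ := ∑ i', ∑ j', |w i' j'| with hMdef
  have hM : ∀ i' j', |w i' j'| ≤ M := by
    intro i' j'
    calc |w i' j'| ≤ ∑ j'', |w i' j''| :=
          Finset.single_le_sum (f := fun j'' => |w i' j''|)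
            (fun j'' _ => abs_nonneg _) (Finset.mem_univ j')
      _ ≤ M := Finset.single_le_sum (f := fun i'' => ∑ j'', |w i'' j''|)
          (fun i'' _ => Finset.sum_nonneg fun j'' _ => abs_nonneg (w i'' j''))
          (Finset.mem_univ i')
  have hM0 : 0 ≤ M := le_trans (abs_nonneg _) (hM i j)
  set b : ℝ := (E \ redundantEdges ν μ E).inf' hFne (fun e => xb e.1 e.2) with hbdef
  have hb : 0 < b := by
    rw [hbdef, Finset.lt_inf'_iff]
    exact fun e he => hxbpos e he
  have hble : ∀ e ∈ E \ redundantEdges ν μ E, b ≤ xb e.1 e.2 :=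
    fun e he => Finset.inf'_le _ he
  set ε : ℝ := b / (M + 1) with hεdef
  have hε : 0 < ε := by positivity
  have hεM : ε * M ≤ b := by
    have h1 : ε * (M + 1) = b := by
      rw [hεdef]; field_simp
    nlinarith
  have hx' : (fun i' j' => xb i' j' + ε * w i' j') ∈ transportationPolytope ν μ E := by
    refine ⟨?_, ?_, ?_, ?_⟩
    · intro i' j'
      by_cases hFm : (i', j') ∈ E \ redundantEdges ν μ E
      · have h1 : b ≤ xb i' j' := hble _ hFm
        have h2 : -M ≤ w i' j' := neg_le_of_abs_le (hM i' j')
        have h3 : ε * (-M) ≤ ε * w i' j' := mul_le_mul_of_nonneg_left h2 hε.le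
        show 0 ≤ xb i' j' + ε * w i' j'
        nlinarith
      · have hz0 : ¬ w i' j' < 0 := fun hlt => hFm (hwF i' j' hlt)
        push_neg at hz0
        have h1 := hxb.1 i' j'
        show 0 ≤ xb i' j' + ε * w i' j'
        nlinarith
    · intro i'
      show ∑ j', (xb i' j' + ε * w i' j') = ν i'
      rw [Finset.sum_add_distrib, hxb.2.1 i', ← Finset.mul_sum, hwr i', mul_zero, add_zero]
    · intro j'
      show ∑ i', (xb i' j' + ε * w i' j') = μ j'
      rw [Finset.sum_add_distrib, hxb.2.2.1 j', ← Finset.mul_sum, hwc j', mul_zero, add_zero]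
    · intro i' j' hE'
      show xb i' j' + ε * w i' j' = 0
      rw [hxb.2.2.2 i' j' hE']
      have hw0 : w i' j' = 0 := by
        by_contra hc
        exact hE' (hwE i' j' hc)
      rw [hw0, mul_zero, add_zero]
  have hzero : xb i j + ε * w i j = 0 := redundant_zero hx' hred
  have hpos : 0 < xb i j + ε * w i j := by
    have h1 := hxb.1 i j
    nlinarith
  linarith

lemma reach'_of_reachable {ν : Fin m → ℝ} {μ : Fin n → ℝ} {E : Finset (Fin m × Fin n)}
    {u v : Fin m ⊕ Fin n}
    (h : (bipartiteGraph (E \ redundantEdges ν μ E)).Reachable u v) :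
    reach' ν μ E u v := by
  obtain ⟨w⟩ := h
  induction w with
  | nil => exact Relation.ReflTransGen.refl
  | cons hadj _ ih => exact Relation.ReflTransGen.head (Or.inl hadj) ih

lemma reach'_of_chain {ν : Fin m → ℝ} {μ : Fin n → ℝ} {E : Finset (Fin m × Fin n)}
    {c₁ c₂ : (bipartiteGraph (E \ redundantEdges ν μ E)).ConnectedComponent}
    (h : Relation.ReflTransGen (crpRel ν μ E) c₁ c₂) :
    ∀ u v : Fin m ⊕ Fin n,
      (bipartiteGraph (E \ redundantEdges ν μ E)).connectedComponentMk u = c₁ →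
      (bipartiteGraph (E \ redundantEdges ν μ E)).connectedComponentMk v = c₂ →
      reach' ν μ E u v := by
  induction h using Relation.ReflTransGen.head_induction_on with
  | refl =>
      intro u v hu hv
      exact reach'_of_reachable
        ((SimpleGraph.ConnectedComponent.eq).mp (hu.trans hv.symm))
  | head hstep _ ih =>
      intro u v hu hv
      obtain ⟨hne2, i, j, hijE, hmki, hmkj⟩ := hstep
      have r1 : reach' ν μ E u (Sum.inl i) :=
        reach'_of_reachable
          ((SimpleGraph.ConnectedComponent.eq).mp (hu.trans hmki.symm))
      have r2 : reach' ν μ E (Sum.inl i) (Sum.inr j) :=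
        Relation.ReflTransGen.single (Or.inr ⟨i, j, rfl, rfl, hijE⟩)
      have r3 : reach' ν μ E (Sum.inr j) v := ih (Sum.inr j) v hmkj hv
      exact (r1.trans r2).trans r3

lemma crp_antisymm {ν : Fin m → ℝ} {μ : Fin n → ℝ} {E : Finset (Fin m × Fin n)}
    (hne : (transportationPolytope ν μ E).Nonempty)
    (hFne : (E \ redundantEdges ν μ E).Nonempty)
    {c c' : (bipartiteGraph (E \ redundantEdges ν μ E)).ConnectedComponent}
    (h1 : Relation.ReflTransGen (crpRel ν μ E) c c')
    (h2 : Relation.ReflTransGen (crpRel ν μ E) c' c) : c = c' := by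
  by_contra hcc
  rcases Relation.ReflTransGen.cases_head h1 with heq | ⟨c₂, hstep, htail⟩
  · exact hcc heq
  obtain ⟨hne2, i, j, hijE, hmki, hmkj⟩ := hstep
  have hchain : Relation.ReflTransGen (crpRel ν μ E) c₂ c := htail.trans h2
  have hr : reach' ν μ E (Sum.inr j) (Sum.inl i) :=
    reach'_of_chain hchain _ _ hmkj hmki
  have hmem := mem_F_of_reach' hne hFne hijE hr
  exact hne2 (by rw [← hmki, ← hmkj]; exact mk_eq_of_mem_F hmem)
lemma fiber_flow {ν : Fin m → ℝ} {μ : Fin n → ℝ} {E : Finset (Fin m × Fin n)}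
    {x : Fin m → Fin n → ℝ} (hx : x ∈ transportationPolytope ν μ E)
    (C : Set (bipartiteGraph (E \ redundantEdges ν μ E)).ConnectedComponent) :
    ∑ i ∈ Finset.univ.filter (fun i =>
        (bipartiteGraph (E \ redundantEdges ν μ E)).connectedComponentMk (Sum.inl i) ∈ C), ν i
      = ∑ j ∈ Finset.univ.filter (fun j =>
        (bipartiteGraph (E \ redundantEdges ν μ E)).connectedComponentMk (Sum.inr j) ∈ C), μ j := by
  classical
  set S := Finset.univ.filter (fun i =>
    (bipartiteGraph (E \ redundantEdges ν μ E)).connectedComponentMk (Sum.inl i) ∈ C) with hS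
  set Sj := Finset.univ.filter (fun j =>
    (bipartiteGraph (E \ redundantEdges ν μ E)).connectedComponentMk (Sum.inr j) ∈ C) with hSj
  have key : ∀ i ∈ S, ∀ j, j ∉ Sj → x i j = 0 := by
    intro i hi j hj
    by_contra hne
    have hF := support_mem hx hne
    have : (bipartiteGraph (E \ redundantEdges ν μ E)).connectedComponentMk (Sum.inr j) ∈ C := by
      rw [← mk_eq_of_mem_F hF]
      exact (Finset.mem_filter.mp hi).2
    exact hj (Finset.mem_filter.mpr ⟨Finset.mem_univ j, this⟩)
  have key2 : ∀ j ∈ Sj, ∀ i, i ∉ S → x i j = 0 := by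
    intro j hj i hi
    by_contra hne
    have hF := support_mem hx hne
    have : (bipartiteGraph (E \ redundantEdges ν μ E)).connectedComponentMk (Sum.inl i) ∈ C := by
      rw [mk_eq_of_mem_F hF]
      exact (Finset.mem_filter.mp hj).2
    exact hi (Finset.mem_filter.mpr ⟨Finset.mem_univ i, this⟩)
  calc ∑ i ∈ S, ν i = ∑ i ∈ S, ∑ j, x i j := by
        exact Finset.sum_congr rfl fun i _ => (hx.2.1 i).symm
    _ = ∑ i ∈ S, ∑ j ∈ Sj, x i j := by
        refine Finset.sum_congr rfl fun i hi => ?_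
        exact (Finset.sum_subset (Finset.subset_univ Sj)
          (fun j _ hj => key i hi j hj)).symm
    _ = ∑ j ∈ Sj, ∑ i ∈ S, x i j := Finset.sum_comm
    _ = ∑ j ∈ Sj, ∑ i, x i j := by
        refine Finset.sum_congr rfl fun j hj => ?_
        exact Finset.sum_subset (Finset.subset_univ S) (fun i _ hi => key2 j hj i hi)
    _ = ∑ j ∈ Sj, μ j := Finset.sum_congr rfl fun j _ => hx.2.2.1 j

lemma closed_binding {ν : Fin m → ℝ} {μ : Fin n → ℝ} {E : Finset (Fin m × Fin n)}
    (hμ : ∀ j, 0 < μ j) {x : Fin m → Fin n → ℝ}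
    (hx : x ∈ transportationPolytope ν μ E)
    (C : Set (bipartiteGraph (E \ redundantEdges ν μ E)).ConnectedComponent)
    (hC : ∀ c₁ c₂, crpRel ν μ E c₁ c₂ → c₁ ∈ C → c₂ ∈ C) :
    IsBinding ν μ E (Finset.univ.filter fun i =>
      (bipartiteGraph (E \ redundantEdges ν μ E)).connectedComponentMk (Sum.inl i) ∈ C) := by
  classical
  have hnbr : nbr E (Finset.univ.filter fun i =>
      (bipartiteGraph (E \ redundantEdges ν μ E)).connectedComponentMk (Sum.inl i) ∈ C)
      = Finset.univ.filter (fun j =>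
        (bipartiteGraph (E \ redundantEdges ν μ E)).connectedComponentMk (Sum.inr j) ∈ C) := by
    ext j
    rw [mem_nbr, Finset.mem_filter]
    constructor
    · rintro ⟨i, hiS, hijE⟩
      rw [Finset.mem_filter] at hiS
      refine ⟨Finset.mem_univ j, ?_⟩
      by_cases hF : (i, j) ∈ E \ redundantEdges ν μ E
      · rw [← mk_eq_of_mem_F hF]
        exact hiS.2
      · by_cases hceq : (bipartiteGraph (E \ redundantEdges ν μ E)).connectedComponentMk
            (Sum.inr j) = (bipartiteGraph (E \ redundantEdges ν μ E)).connectedComponentMk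
            (Sum.inl i)
        · rw [hceq]; exact hiS.2
        · exact hC _ _ ⟨fun h => hceq h.symm, i, j, hijE, rfl, rfl⟩ hiS.2
    · rintro ⟨-, hjC⟩
      obtain ⟨i, hiF⟩ := exists_col_entry hx (hμ j)
      refine ⟨i, Finset.mem_filter.mpr ⟨Finset.mem_univ i, ?_⟩, (Finset.mem_sdiff.mp hiF).1⟩
      rw [mk_eq_of_mem_F hiF]
      exact hjC
  rw [IsBinding, hnbr]
  exact fiber_flow hx C

lemma binding_forces_zero {ν : Fin m → ℝ} {μ : Fin n → ℝ} {E : Finset (Fin m × Fin n)}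
    {S : Finset (Fin m)} (hb : IsBinding ν μ E S) {x : Fin m → Fin n → ℝ}
    (hx : x ∈ transportationPolytope ν μ E) {i : Fin m} {j : Fin n}
    (hiS : i ∉ S) (hj : j ∈ nbr E S) : x i j = 0 := by
  classical
  have hrow : ∀ i' ∈ S, ∑ j' ∈ nbr E S, x i' j' = ν i' := by
    intro i' hi'
    rw [← hx.2.1 i']
    apply Finset.sum_subset (Finset.subset_univ _)
    intro j' _ hj'
    by_contra hne
    have hE : (i', j') ∈ E := (Finset.mem_sdiff.mp (support_mem hx hne)).1
    exact hj' (mem_nbr.mpr ⟨i', hi', hE⟩)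
  have hsplit : ∀ j', ∑ i', x i' j' = ∑ i' ∈ S, x i' j' + ∑ i' ∈ Finset.univ \ S, x i' j' := by
    intro j'
    rw [add_comm, Finset.sum_sdiff (Finset.subset_univ S)]
  have hzero : ∑ j' ∈ nbr E S, ∑ i' ∈ Finset.univ \ S, x i' j' = 0 := by
    have h1 : ∑ j' ∈ nbr E S, μ j' = ∑ i' ∈ S, ν i' := hb.symm
    have h2 : ∑ j' ∈ nbr E S, ∑ i', x i' j' = ∑ j' ∈ nbr E S, μ j' :=
      Finset.sum_congr rfl fun j' _ => hx.2.2.1 j'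
    have h3 : ∑ j' ∈ nbr E S, ∑ i' ∈ S, x i' j' = ∑ i' ∈ S, ν i' := by
      rw [Finset.sum_comm]
      exact Finset.sum_congr rfl hrow
    have h4 := Finset.sum_congr rfl fun j' (_ : j' ∈ nbr E S) => hsplit j'
    rw [h2, h1] at h4
    rw [Finset.sum_add_distrib, h3] at h4
    linarith
  have hnn : ∀ j' ∈ nbr E S, 0 ≤ ∑ i' ∈ Finset.univ \ S, x i' j' :=
    fun j' _ => Finset.sum_nonneg fun i' _ => hx.1 i' j'
  have h5 := (Finset.sum_eq_zero_iff_of_nonneg hnn).mp hzero j hj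
  have hnn2 : ∀ i' ∈ Finset.univ \ S, 0 ≤ x i' j := fun i' _ => hx.1 i' j
  exact (Finset.sum_eq_zero_iff_of_nonneg hnn2).mp h5 i
    (Finset.mem_sdiff.mpr ⟨Finset.mem_univ i, hiS⟩)

lemma binding_reach {ν : Fin m → ℝ} {μ : Fin n → ℝ} {E : Finset (Fin m × Fin n)}
    {S : Finset (Fin m)} (hb : IsBinding ν μ E S) {u v : Fin m ⊕ Fin n}
    (h : (bipartiteGraph (E \ redundantEdges ν μ E)).Reachable u v)
    (hu : (∀ i, u = Sum.inl i → i ∈ S) ∧ (∀ j, u = Sum.inr j → j ∈ nbr E S)) :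
    (∀ i, v = Sum.inl i → i ∈ S) ∧ (∀ j, v = Sum.inr j → j ∈ nbr E S) := by
  obtain ⟨w⟩ := h
  induction w with
  | nil => exact hu
  | cons hadj p ih =>
      apply ih
      rw [bipartiteGraph_adj] at hadj
      obtain ⟨i₀, j₀, hF, ⟨ha, hbv⟩ | ⟨ha, hbv⟩⟩ := hadj
      · subst ha; subst hbv
        have hi₀ : i₀ ∈ S := hu.1 i₀ rfl
        constructor
        · intro i hi; exact absurd hi (by simp)
        · rintro j hj
          injection hj with hj'
          subst hj'
          exact mem_nbr.mpr ⟨i₀, hi₀, (Finset.mem_sdiff.mp hF).1⟩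
      · subst ha; subst hbv
        have hj₀ : j₀ ∈ nbr E S := hu.2 j₀ rfl
        constructor
        · rintro i hi
          injection hi with hi'
          subst hi'
          by_contra hiS
          have hred : (i₀, j₀) ∈ redundantEdges ν μ E := by
            rw [redundantEdges, Finset.mem_filter]
            exact ⟨(Finset.mem_sdiff.mp hF).1,
              fun x hx => binding_forces_zero hb hx hiS hj₀⟩
          exact (Finset.mem_sdiff.mp hF).2 hred
        · intro j hj; exact absurd hj (by simp)
lemma indicator_diff {α : Type*} (f : Fin m → α) (c : α) (D : Set α) (hc : c ∈ D) :
    indicatorVec (Finset.univ.filter fun i => f i = c)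
      = indicatorVec (Finset.univ.filter fun i => f i ∈ D)
        - indicatorVec (Finset.univ.filter fun i => f i ∈ D ∧ f i ≠ c) := by
  classical
  funext i
  simp only [indicatorVec, Finset.mem_filter, Finset.mem_univ, true_and, Pi.sub_apply]
  by_cases h : f i = c
  · rw [if_pos h, if_pos (show f i ∈ D by rw [h]; exact hc),
      if_neg (fun hh => hh.2 h)]
    ring
  · rw [if_neg h]
    by_cases h2 : f i ∈ D
    · rw [if_pos h2, if_pos ⟨h2, h⟩]; ring
    · rw [if_neg h2, if_neg fun hh => h2 hh.1]; ring

lemma binding_indicator_eq {ν : Fin m → ℝ} {μ : Fin n → ℝ} {E : Finset (Fin m × Fin n)}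
    [Fintype (bipartiteGraph (E \ redundantEdges ν μ E)).ConnectedComponent]
    {S : Finset (Fin m)} (hb : IsBinding ν μ E S) :
    indicatorVec S = ∑ c ∈ Finset.univ.filter (fun c => ∃ i ∈ S,
        (bipartiteGraph (E \ redundantEdges ν μ E)).connectedComponentMk (Sum.inl i) = c),
      indicatorVec (Finset.univ.filter fun i =>
        (bipartiteGraph (E \ redundantEdges ν μ E)).connectedComponentMk (Sum.inl i) = c) := by
  classical
  funext i₀
  rw [Finset.sum_apply]
  have hterm : ∀ c, indicatorVec (Finset.univ.filter fun i =>
      (bipartiteGraph (E \ redundantEdges ν μ E)).connectedComponentMk (Sum.inl i) = c) i₀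
      = if (bipartiteGraph (E \ redundantEdges ν μ E)).connectedComponentMk (Sum.inl i₀) = c
        then (1 : ℝ) else 0 := by
    intro c
    simp [indicatorVec, Finset.mem_filter]
  rw [Finset.sum_congr rfl fun c _ => hterm c, Finset.sum_ite_eq]
  show indicatorVec S i₀ = _
  simp only [indicatorVec]
  by_cases hi₀ : i₀ ∈ S
  · rw [if_pos hi₀, if_pos (Finset.mem_filter.mpr ⟨Finset.mem_univ _, ⟨i₀, hi₀, rfl⟩⟩)]
  · rw [if_neg hi₀, if_neg]
    intro hmem
    obtain ⟨-, i, hiS, heq⟩ := Finset.mem_filter.mp hmem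
    have hreach : (bipartiteGraph (E \ redundantEdges ν μ E)).Reachable
        (Sum.inl i) (Sum.inl i₀) := (SimpleGraph.ConnectedComponent.eq).mp heq
    have := (binding_reach hb hreach
      ⟨fun i' h => by injection h with h'; exact h' ▸ hiS,
       fun j' h => absurd h (Sum.inl_ne_inr)⟩).1 i₀ rfl
    exact hi₀ this

theorem stmt_6_aux {m n : ℕ} (hm : 1 ≤ m) (hn : 1 ≤ n)
    (ν : Fin m → ℝ) (μ : Fin n → ℝ) (E : Finset (Fin m × Fin n))
    (hν : ∀ i, 0 < ν i) (hμ : ∀ j, 0 < μ j)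
    (hne : (transportationPolytope ν μ E).Nonempty) :
    (∀ c, (Finset.univ.filter fun i =>
      (bipartiteGraph (E \ redundantEdges ν μ E)).connectedComponentMk (Sum.inl i) = c).Nonempty) ∧
    (∀ c₁ c₂ : (bipartiteGraph (E \ redundantEdges ν μ E)).ConnectedComponent, c₁ ≠ c₂ →
      Disjoint
        (Finset.univ.filter fun i =>
          (bipartiteGraph (E \ redundantEdges ν μ E)).connectedComponentMk (Sum.inl i) = c₁)
        (Finset.univ.filter fun i =>
          (bipartiteGraph (E \ redundantEdges ν μ E)).connectedComponentMk (Sum.inl i) = c₂)) ∧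
    (∀ i : Fin m, ∃ c, i ∈ (Finset.univ.filter fun i =>
      (bipartiteGraph (E \ redundantEdges ν μ E)).connectedComponentMk (Sum.inl i) = c)) ∧
    (Submodule.span ℝ {v : Fin m → ℝ | ∃ S, IsBinding ν μ E S ∧ v = indicatorVec S} =
      Submodule.span ℝ (Set.range fun c => indicatorVec (Finset.univ.filter fun i =>
        (bipartiteGraph (E \ redundantEdges ν μ E)).connectedComponentMk (Sum.inl i) = c))) ∧
    Module.finrank ℝ
      ↥(Submodule.span ℝ {v : Fin m → ℝ | ∃ S, IsBinding ν μ E S ∧ v = indicatorVec S}) =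
      erpNumber ν μ E := by
  classical
  obtain ⟨x₀, hx₀⟩ := hne
  have hneT : (transportationPolytope ν μ E).Nonempty := ⟨x₀, hx₀⟩
  have hFne : (E \ redundantEdges ν μ E).Nonempty := by
    obtain ⟨j, hj⟩ := exists_row_entry hx₀ (hν ⟨0, hm⟩)
    exact ⟨(⟨0, hm⟩, j), hj⟩
  haveI : Fintype (bipartiteGraph (E \ redundantEdges ν μ E)).ConnectedComponent :=
    Fintype.ofFinite _
  -- nonempty demand parts
  have hIne : ∀ c, (Finset.univ.filter fun i =>
      (bipartiteGraph (E \ redundantEdges ν μ E)).connectedComponentMk (Sum.inl i) = c).Nonempty := by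
    refine SimpleGraph.ConnectedComponent.ind ?_
    rintro (i | j)
    · exact ⟨i, Finset.mem_filter.mpr ⟨Finset.mem_univ i, rfl⟩⟩
    · obtain ⟨i, hiF⟩ := exists_col_entry hx₀ (hμ j)
      exact ⟨i, Finset.mem_filter.mpr ⟨Finset.mem_univ i, mk_eq_of_mem_F hiF⟩⟩
  -- disjointness
  have hdisj : ∀ c₁ c₂ : (bipartiteGraph (E \ redundantEdges ν μ E)).ConnectedComponent,
      c₁ ≠ c₂ → Disjoint
        (Finset.univ.filter fun i =>
          (bipartiteGraph (E \ redundantEdges ν μ E)).connectedComponentMk (Sum.inl i) = c₁)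
        (Finset.univ.filter fun i =>
          (bipartiteGraph (E \ redundantEdges ν μ E)).connectedComponentMk (Sum.inl i) = c₂) := by
    intro c₁ c₂ hcc
    rw [Finset.disjoint_left]
    intro i h1 h2
    exact hcc ((Finset.mem_filter.mp h1).2.symm.trans (Finset.mem_filter.mp h2).2)
  -- span equality
  have hspan : Submodule.span ℝ {v : Fin m → ℝ | ∃ S, IsBinding ν μ E S ∧ v = indicatorVec S} =
      Submodule.span ℝ (Set.range fun c => indicatorVec (Finset.univ.filter fun i =>
        (bipartiteGraph (E \ redundantEdges ν μ E)).connectedComponentMk (Sum.inl i) = c)) := by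
    apply le_antisymm
    · rw [Submodule.span_le]
      rintro v ⟨S, hS, rfl⟩
      rw [binding_indicator_eq hS]
      exact Submodule.sum_mem _ fun c _ => Submodule.subset_span ⟨c, rfl⟩
    · rw [Submodule.span_le]
      rintro v ⟨c, rfl⟩
      show indicatorVec _ ∈ _
      have hDbind := closed_binding hμ hx₀
        {c' | Relation.ReflTransGen (crpRel ν μ E) c c'}
        (fun c₁ c₂ hrel h1 => Relation.ReflTransGen.tail h1 hrel)
      have hDmbind := closed_binding hμ hx₀
        {c' | Relation.ReflTransGen (crpRel ν μ E) c c' ∧ c' ≠ c}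
        (by
          rintro c₁ c₂ hrel ⟨h1, hne1⟩
          refine ⟨Relation.ReflTransGen.tail h1 hrel, ?_⟩
          intro hc2
          subst hc2
          exact hne1 (crp_antisymm hneT hFne h1
            (Relation.ReflTransGen.single hrel)).symm)
      have hid := indicator_diff
        (fun i => (bipartiteGraph (E \ redundantEdges ν μ E)).connectedComponentMk (Sum.inl i))
        c {c' | Relation.ReflTransGen (crpRel ν μ E) c c'} Relation.ReflTransGen.refl
      rw [hid]
      apply sub_mem
      · refine Submodule.subset_span ⟨_, hDbind, ?_⟩
        exact congrArg indicatorVec (by congr 1)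
      · refine Submodule.subset_span ⟨_, hDmbind, ?_⟩
        exact congrArg indicatorVec (by congr 1)
  refine ⟨hIne, hdisj,
    fun i => ⟨_, Finset.mem_filter.mpr ⟨Finset.mem_univ i, rfl⟩⟩, hspan, ?_⟩
  -- linear independence and rank
  have hli : LinearIndependent ℝ (fun c => indicatorVec (Finset.univ.filter fun i =>
      (bipartiteGraph (E \ redundantEdges ν μ E)).connectedComponentMk (Sum.inl i) = c)) := by
    rw [Fintype.linearIndependent_iff]
    intro g hg c
    obtain ⟨ic, hic⟩ := hIne c
    have hmkc : (bipartiteGraph (E \ redundantEdges ν μ E)).connectedComponentMk (Sum.inl ic)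
        = c := (Finset.mem_filter.mp hic).2
    have heval := congrFun hg ic
    rw [Finset.sum_apply] at heval
    have hterm : ∀ c', (g c' • indicatorVec (Finset.univ.filter fun i =>
        (bipartiteGraph (E \ redundantEdges ν μ E)).connectedComponentMk (Sum.inl i) = c')) ic
        = if c = c' then g c' else 0 := by
      intro c'
      rw [Pi.smul_apply, smul_eq_mul]
      simp only [indicatorVec, Finset.mem_filter, Finset.mem_univ, true_and, hmkc]
      by_cases h : c = c'
      · rw [if_pos h, if_pos h, mul_one]
      · rw [if_neg h, if_neg h, mul_zero]
    rw [Finset.sum_congr rfl fun c' _ => hterm c', Finset.sum_ite_eq] at heval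
    rw [if_pos (Finset.mem_univ c)] at heval
    exact heval
  rw [hspan, finrank_span_eq_card hli, erpNumber, numComponents, Nat.card_eq_fintype_card]

end Stmt6Aux


/-- the demand parts of the connected components of `G(E ∖ E_r)` form a disjoint
cover of `I` whose indicators span the same subspace as the binding-set indicators; in
particular the dimension of that span is the ERP number. -/
theorem stmt_6 {m n : ℕ} (hm : 1 ≤ m) (hn : 1 ≤ n)
    (ν : Fin m → ℝ) (μ : Fin n → ℝ) (E : Finset (Fin m × Fin n))
    (hν : ∀ i, 0 < ν i) (hμ : ∀ j, 0 < μ j)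
    (hne : (transportationPolytope ν μ E).Nonempty) :
    let G := bipartiteGraph (E \ redundantEdges ν μ E)
    let Iset : G.ConnectedComponent → Finset (Fin m) :=
      fun c => Finset.univ.filter fun i => G.connectedComponentMk (Sum.inl i) = c
    (∀ c, (Iset c).Nonempty) ∧
    (∀ c₁ c₂, c₁ ≠ c₂ → Disjoint (Iset c₁) (Iset c₂)) ∧
    (∀ i : Fin m, ∃ c, i ∈ Iset c) ∧
    (Submodule.span ℝ {v : Fin m → ℝ | ∃ S, IsBinding ν μ E S ∧ v = indicatorVec S} =
      Submodule.span ℝ (Set.range fun c => indicatorVec (Iset c))) ∧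
    Module.finrank ℝ
      ↥(Submodule.span ℝ {v : Fin m → ℝ | ∃ S, IsBinding ν μ E S ∧ v = indicatorVec S}) =
      erpNumber ν μ E := by
  intro G Iset
  exact stmt_6_aux hm hn ν μ E hν hμ hne
end

section
/- Let ν ∈ ℤ_{>0}^m and μ ∈ ℤ_{>0}^n with ∑_{i∈I} ν_i = ∑_{j∈J} μ_j. If E ⊆ I × J is such that T_E(ν,μ) is nonempty and the ERP number of T_E(ν,μ) equals d, then |E| ≥ m + n − d; moreover, if d < d_⋆ then |E| ≥ m + n − d + 1. -/
open scoped Classical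

/-!
A graph on `m + n` vertices with `k` edges has at least `m + n - k` connected components, and
`G(E ∖ E_r)` has `d` of them; this is the first bound. When it is tight, no edge is redundant and
`G(E)` is a forest. Deleting an edge `(a, b)` of a forest separates `a` from `b`, and conservation
of flow across the cut around the component `S ⊔ N` of `a` forces `x_ab = ν(S) - μ(N)` for every
`x ∈ T_E(ν,μ)`: an integer multiple of `g = gcd(ν,μ)`, positive because the edge is not redundant,
hence at least `g`. Summing over the edges gives `|E| g ≤ ∑ᵢ νᵢ`, i.e. `m + n - d ≤ ∑ᵢ νᵢ / g`,
which together with `d ≥ 1` rules out `d < d_⋆`.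
-/

namespace SimpleGraph

variable {V : Type*} {G : SimpleGraph V} {s t u v : V}

theorem Reachable.sup_edge_cases (h : (G ⊔ edge s t).Reachable u v) :
    G.Reachable u v ∨ (G.Reachable u s ∧ G.Reachable t v) ∨
      (G.Reachable u t ∧ G.Reachable s v) := by
  obtain ⟨p⟩ := h
  induction p with
  | nil => exact Or.inl .rfl
  | cons huw p ih =>
    rcases sup_adj .. |>.mp huw with hG | hst
    · have := hG.reachable
      exact ih.imp (this.trans ·) (.imp (.imp_left (this.trans ·)) (.imp_left (this.trans ·)))
    · rcases (edge_adj ..).mp hst |>.1 with ⟨rfl, rfl⟩ | ⟨rfl, rfl⟩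
      · rcases ih with h | ⟨-, h⟩ | ⟨-, h⟩
        exacts [Or.inr (Or.inl ⟨.rfl, h⟩), Or.inr (Or.inl ⟨.rfl, h⟩), Or.inl h]
      · rcases ih with h | ⟨-, h⟩ | ⟨-, h⟩
        exacts [Or.inr (Or.inr ⟨.rfl, h⟩), Or.inl h, Or.inr (Or.inr ⟨.rfl, h⟩)]

theorem card_connectedComponent_sup_edge_of_reachable (hst : G.Reachable s t) :
    Nat.card (G ⊔ edge s t).ConnectedComponent = Nat.card G.ConnectedComponent := by
  refine (Nat.card_eq_of_bijective _ ⟨?_, ConnectedComponent.surjective_map_ofLE le_sup_left⟩).symm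
  refine ConnectedComponent.ind₂ fun u v huv => ?_
  simp only [ConnectedComponent.map_mk, Hom.coe_ofLE, id, ConnectedComponent.eq] at huv
  rcases huv.sup_edge_cases with h | ⟨h₁, h₂⟩ | ⟨h₁, h₂⟩
  exacts [ConnectedComponent.sound h, ConnectedComponent.sound (h₁.trans (hst.trans h₂)),
    ConnectedComponent.sound (h₁.trans (hst.symm.trans h₂))]

theorem card_connectedComponent_le_card_sup_edge_add_one [Finite V] (G : SimpleGraph V)
    (s t : V) :
    Nat.card G.ConnectedComponent ≤ Nat.card (G ⊔ edge s t).ConnectedComponent + 1 := by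
  let φ := ConnectedComponent.map (Hom.ofLE (le_sup_left : G ≤ G ⊔ edge s t))
  -- the edge can only merge the component of `s` into another one
  have hinj : Set.InjOn φ {G.connectedComponentMk s}ᶜ := by
    intro c hc c' hc' hcc'
    induction c using ConnectedComponent.ind with | h u => ?_
    induction c' using ConnectedComponent.ind with | h v => ?_
    simp only [Set.mem_compl_iff, Set.mem_singleton_iff, ConnectedComponent.eq] at hc hc'
    simp only [φ, ConnectedComponent.map_mk, Hom.coe_ofLE, id, ConnectedComponent.eq] at hcc'
    rcases hcc'.sup_edge_cases with h | ⟨h, -⟩ | ⟨-, h⟩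
    exacts [ConnectedComponent.sound h, absurd h hc, absurd h.symm hc']
  have : Nonempty G.ConnectedComponent := ⟨G.connectedComponentMk s⟩
  calc Nat.card G.ConnectedComponent
      = ({G.connectedComponentMk s}ᶜ : Set _).ncard + 1 := by
        rw [Set.ncard_compl, Set.ncard_singleton, Nat.sub_add_cancel Nat.card_pos]
    _ ≤ Nat.card (G ⊔ edge s t).ConnectedComponent + 1 := by
        gcongr
        exact (Set.ncard_le_ncard_of_injOn φ (fun _ _ => Set.mem_univ _) hinj).trans_eq
          (Set.ncard_univ _)

end SimpleGraph

section BipartiteGraph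

open SimpleGraph

variable {m n : ℕ}

theorem bipartiteGraph_adj_of_mem {F : Finset (Fin m × Fin n)} {i : Fin m} {j : Fin n}
    (hij : (i, j) ∈ F) : (bipartiteGraph F).Adj (.inl i) (.inr j) := by
  simp only [bipartiteGraph, fromRel_adj, ne_eq, reduceCtorEq, not_false_eq_true, true_and]
  exact .inl ⟨i, j, rfl, rfl, hij⟩

theorem bipartiteGraph_insert (e : Fin m × Fin n) (F : Finset (Fin m × Fin n)) :
    bipartiteGraph (insert e F) = bipartiteGraph F ⊔ edge (.inl e.1) (.inr e.2) := by
  ext u v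
  simp only [bipartiteGraph, fromRel_adj, sup_adj, edge_adj, Finset.mem_insert]
  aesop

theorem numComponents_empty : numComponents (∅ : Finset (Fin m × Fin n)) = m + n := by
  have hbot : bipartiteGraph (∅ : Finset (Fin m × Fin n)) = ⊥ := by
    ext u v
    simp [bipartiteGraph]
  have hbij :
      Function.Bijective (bipartiteGraph (∅ : Finset (Fin m × Fin n))).connectedComponentMk :=
    ⟨fun u v huv => by rwa [ConnectedComponent.eq, hbot, reachable_bot] at huv,
      fun c => c.exists_rep⟩
  rw [numComponents, ← Nat.card_eq_of_bijective _ hbij, Nat.card_sum, Nat.card_fin, Nat.card_fin]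

theorem add_le_card_add_numComponents (F : Finset (Fin m × Fin n)) :
    m + n ≤ F.card + numComponents F := by
  induction F using Finset.induction_on with
  | empty => simp [numComponents_empty]
  | @insert e F he ih =>
    have :=
      card_connectedComponent_le_card_sup_edge_add_one (bipartiteGraph F) (.inl e.1) (.inr e.2)
    rw [numComponents, bipartiteGraph_insert, Finset.card_insert_of_notMem he]
    rw [numComponents] at ih
    omega

theorem numComponents_insert_of_reachable {F : Finset (Fin m × Fin n)} {e : Fin m × Fin n}
    (he : (bipartiteGraph F).Reachable (.inl e.1) (.inr e.2)) :
    numComponents (insert e F) = numComponents F := by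
  rw [numComponents, bipartiteGraph_insert, card_connectedComponent_sup_edge_of_reachable he,
    numComponents]

theorem not_reachable_erase_of_card_add_numComponents_eq {F : Finset (Fin m × Fin n)}
    (hF : F.card + numComponents F = m + n) {e : Fin m × Fin n} (he : e ∈ F) :
    ¬(bipartiteGraph (F.erase e)).Reachable (.inl e.1) (.inr e.2) := fun hreach => by
  have hcomp := numComponents_insert_of_reachable hreach
  rw [Finset.insert_erase he] at hcomp
  have := add_le_card_add_numComponents (F.erase e)
  have := Finset.card_erase_add_one he
  omega

theorem numComponents_pos (hm : 0 < m) (F : Finset (Fin m × Fin n)) : 0 < numComponents F :=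
  have : Nonempty (bipartiteGraph F).ConnectedComponent :=
    ⟨(bipartiteGraph F).connectedComponentMk (.inl ⟨0, hm⟩)⟩
  Nat.card_pos

end BipartiteGraph

section Transportation

open Finset

variable {m n : ℕ} {ν : Fin m → ℝ} {μ : Fin n → ℝ} {E : Finset (Fin m × Fin n)}
  {x : Fin m → Fin n → ℝ}

theorem exists_pos_of_notMem_redundantEdges {e : Fin m × Fin n} (he : e ∈ E)
    (hr : e ∉ redundantEdges ν μ E) : ∃ y ∈ transportationPolytope ν μ E, 0 < y e.1 e.2 := by
  simp only [redundantEdges, mem_filter, he, true_and, not_forall] at hr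
  obtain ⟨y, hy, hye⟩ := hr
  exact ⟨y, hy, (hy.1 e.1 e.2).lt_of_ne' hye⟩

theorem sum_apply_eq_sum_of_mem_transportationPolytope
    (hx : x ∈ transportationPolytope ν μ E) : ∑ e ∈ E, x e.1 e.2 = ∑ i, ν i := by
  rw [sum_subset (subset_univ E) fun e _ he => hx.2.2.2 e.1 e.2 he, Fintype.sum_prod_type]
  exact sum_congr rfl fun i _ => hx.2.1 i

theorem sum_sub_sum_eq_of_mem_transportationPolytope (hx : x ∈ transportationPolytope ν μ E)
    (S : Finset (Fin m)) (N : Finset (Fin n)) :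
    ∑ i ∈ S, ν i - ∑ j ∈ N, μ j = ∑ i ∈ S, ∑ j ∈ Nᶜ, x i j - ∑ j ∈ N, ∑ i ∈ Sᶜ, x i j := by
  have hS : ∑ i ∈ S, ν i = ∑ i ∈ S, ∑ j ∈ N, x i j + ∑ i ∈ S, ∑ j ∈ Nᶜ, x i j := by
    rw [← sum_add_distrib]
    exact sum_congr rfl fun i _ => by rw [sum_add_sum_compl, hx.2.1]
  have hN : ∑ j ∈ N, μ j = ∑ j ∈ N, ∑ i ∈ S, x i j + ∑ j ∈ N, ∑ i ∈ Sᶜ, x i j := by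
    rw [← sum_add_distrib]
    exact sum_congr rfl fun j _ => by rw [sum_add_sum_compl, hx.2.2.1]
  rw [hS, hN, sum_comm (s := S)]
  ring

noncomputable def componentDemand (F : Finset (Fin m × Fin n)) (v : Fin m ⊕ Fin n) :
    Finset (Fin m) :=
  univ.filter fun i => (bipartiteGraph F).Reachable v (.inl i)

noncomputable def componentSupply (F : Finset (Fin m × Fin n)) (v : Fin m ⊕ Fin n) :
    Finset (Fin n) :=
  univ.filter fun j => (bipartiteGraph F).Reachable v (.inr j)

theorem apply_eq_sum_sub_sum_of_not_reachable {e : Fin m × Fin n}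
    (he : ¬(bipartiteGraph (E.erase e)).Reachable (.inl e.1) (.inr e.2))
    (hx : x ∈ transportationPolytope ν μ E) :
    x e.1 e.2 = ∑ i ∈ componentDemand (E.erase e) (.inl e.1), ν i -
      ∑ j ∈ componentSupply (E.erase e) (.inl e.1), μ j := by
  obtain ⟨a, b⟩ := e
  set S := componentDemand (E.erase (a, b)) (.inl a)
  set N := componentSupply (E.erase (a, b)) (.inl a)
  have haS : a ∈ S := by simp [S, componentDemand]
  have hbN : b ∉ N := by simpa [N, componentSupply] using he
  have hcross : ∀ i j, (i, j) ≠ (a, b) → ¬(i ∈ S ↔ j ∈ N) → x i j = 0 := by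
    intro i j hij hcut
    by_contra hne
    have hadj := bipartiteGraph_adj_of_mem <|
      mem_erase.mpr ⟨hij, by_contra fun h => hne (hx.2.2.2 i j h)⟩
    exact hcut ⟨fun hi => mem_filter.mpr ⟨mem_univ _, (mem_filter.mp hi).2.trans hadj.reachable⟩,
      fun hj => mem_filter.mpr ⟨mem_univ _, (mem_filter.mp hj).2.trans hadj.symm.reachable⟩⟩
  have hout : ∑ i ∈ S, ∑ j ∈ Nᶜ, x i j = x a b := by
    rw [← sum_product']
    refine sum_eq_single_of_mem (a, b) (mem_product.mpr ⟨haS, mem_compl.mpr hbN⟩) ?_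
    rintro ⟨i, j⟩ hij hne
    obtain ⟨hi, hj⟩ := mem_product.mp hij
    exact hcross i j hne fun h => mem_compl.mp hj (h.mp hi)
  have hin : ∑ j ∈ N, ∑ i ∈ Sᶜ, x i j = 0 :=
    sum_eq_zero fun j hj => sum_eq_zero fun i hi =>
      hcross i j (fun h => mem_compl.mp hi (by simp_all)) fun h => mem_compl.mp hi (h.mpr hj)
  rw [sum_sub_sum_eq_of_mem_transportationPolytope hx, hout, hin, sub_zero]

end Transportation

section Integral

open Finset

variable {m n : ℕ} {ν : Fin m → ℕ} {μ : Fin n → ℕ} {E : Finset (Fin m × Fin n)}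
  {x : Fin m → Fin n → ℝ}

theorem gcdVec_dvd_left (ν : Fin m → ℕ) (μ : Fin n → ℕ) (i : Fin m) : gcdVec ν μ ∣ ν i :=
  (Nat.gcd_dvd_left _ _).trans (Finset.gcd_dvd (mem_univ i))

theorem gcdVec_dvd_right (ν : Fin m → ℕ) (μ : Fin n → ℕ) (j : Fin n) : gcdVec ν μ ∣ μ j :=
  (Nat.gcd_dvd_right _ _).trans (Finset.gcd_dvd (mem_univ j))

theorem gcdVec_le_apply_of_not_reachable {e : Fin m × Fin n}
    (he : ¬(bipartiteGraph (E.erase e)).Reachable (.inl e.1) (.inr e.2))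
    (hx : x ∈ transportationPolytope (fun i => (ν i : ℝ)) (fun j => (μ j : ℝ)) E)
    {y : Fin m → Fin n → ℝ}
    (hy : y ∈ transportationPolytope (fun i => (ν i : ℝ)) (fun j => (μ j : ℝ)) E)
    (hye : 0 < y e.1 e.2) : (gcdVec ν μ : ℝ) ≤ x e.1 e.2 := by
  set k : ℤ := ∑ i ∈ componentDemand (E.erase e) (.inl e.1), (ν i : ℤ) -
    ∑ j ∈ componentSupply (E.erase e) (.inl e.1), (μ j : ℤ)
  have hflow : ∀ z ∈ transportationPolytope (fun i => (ν i : ℝ)) (fun j => (μ j : ℝ)) E,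
      z e.1 e.2 = k := fun z hz => by
    rw [apply_eq_sum_sub_sum_of_not_reachable he hz]
    push_cast [k]
    rfl
  have hk : 0 < k := by exact_mod_cast hflow y hy ▸ hye
  have hdvd : (gcdVec ν μ : ℤ) ∣ k :=
    dvd_sub (dvd_sum fun i _ => Int.natCast_dvd_natCast.mpr (gcdVec_dvd_left ν μ i))
      (dvd_sum fun j _ => Int.natCast_dvd_natCast.mpr (gcdVec_dvd_right ν μ j))
  rw [hflow x hx]
  exact_mod_cast Int.le_of_dvd hk hdvd

theorem card_mul_gcdVec_le_sum (hE : E.card + numComponents E = m + n)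
    (hsupp : ∀ e ∈ E, ∃ y ∈ transportationPolytope (fun i => (ν i : ℝ)) (fun j => (μ j : ℝ)) E,
      0 < y e.1 e.2)
    (hx : x ∈ transportationPolytope (fun i => (ν i : ℝ)) (fun j => (μ j : ℝ)) E) :
    E.card * gcdVec ν μ ≤ ∑ i, ν i := by
  have hedge : ∀ e ∈ E, (gcdVec ν μ : ℝ) ≤ x e.1 e.2 := fun e he => by
    obtain ⟨y, hy, hye⟩ := hsupp e he
    exact gcdVec_le_apply_of_not_reachable
      (not_reachable_erase_of_card_add_numComponents_eq hE he) hx hy hye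
  have : (E.card * gcdVec ν μ : ℝ) ≤ ∑ i, (ν i : ℝ) := calc
    (E.card * gcdVec ν μ : ℝ) = ∑ _e ∈ E, (gcdVec ν μ : ℝ) := by rw [sum_const, nsmul_eq_mul]
    _ ≤ ∑ e ∈ E, x e.1 e.2 := sum_le_sum hedge
    _ = ∑ i, (ν i : ℝ) := sum_apply_eq_sum_of_mem_transportationPolytope hx
  exact_mod_cast this

end Integral

theorem stmt_7_general {m n : ℕ} (hm : 1 ≤ m)
    (ν : Fin m → ℕ) (μ : Fin n → ℕ)
    (hν : ∀ i, 0 < ν i)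
    (E : Finset (Fin m × Fin n)) (d : ℕ)
    (hne : (transportationPolytope (fun i => (ν i : ℝ)) (fun j => (μ j : ℝ)) E).Nonempty)
    (hd : erpNumber (fun i => (ν i : ℝ)) (fun j => (μ j : ℝ)) E = d) :
    m + n ≤ E.card + d ∧ (d < dStar ν μ → m + n + 1 ≤ E.card + d) := by
  set R := redundantEdges (fun i => (ν i : ℝ)) (fun j => (μ j : ℝ)) E
  have hbound : m + n ≤ (E \ R).card + d := hd ▸ add_le_card_add_numComponents (E \ R)
  have hsub : (E \ R).card ≤ E.card := Finset.card_le_card Finset.sdiff_subset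
  refine ⟨by omega, fun hlt => ?_⟩
  by_contra htight
  -- in the tight case no edge is redundant and every edge of `G(E)` is a bridge
  have hR : E \ R = E := Finset.eq_of_subset_of_card_le Finset.sdiff_subset (by omega)
  rw [erpNumber, hR] at hd
  have hE : E.card + numComponents E = m + n := by omega
  have hsupp e (he : e ∈ E) := exists_pos_of_notMem_redundantEdges he
    (Finset.mem_sdiff.mp (hR.symm ▸ he : e ∈ E \ R)).2
  obtain ⟨x, hx⟩ := hne
  have hg : 0 < gcdVec ν μ := Nat.pos_of_dvd_of_pos (gcdVec_dvd_left ν μ ⟨0, hm⟩) (hν _)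
  have hcard : E.card ≤ (∑ i, ν i) / gcdVec ν μ :=
    (Nat.le_div_iff_mul_le hg).mpr (card_mul_gcdVec_le_sum hE hsupp hx)
  have hd₁ : 0 < d := hd ▸ numComponents_pos hm E
  unfold dStar at hlt
  omega

/-- necessity: if `T_E(ν,μ)` is nonempty with ERP number `d`, then
`|E| ≥ m + n − d`, and `|E| ≥ m + n − d + 1` whenever `d < d_⋆`. -/
theorem stmt_7 {m n : ℕ} (hm : 1 ≤ m) (hn : 1 ≤ n)
    (ν : Fin m → ℕ) (μ : Fin n → ℕ)
    (hν : ∀ i, 0 < ν i) (hμ : ∀ j, 0 < μ j)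
    (htot : (∑ i, ν i) = ∑ j, μ j)
    (E : Finset (Fin m × Fin n)) (d : ℕ)
    (hne : (transportationPolytope (fun i => (ν i : ℝ)) (fun j => (μ j : ℝ)) E).Nonempty)
    (hd : erpNumber (fun i => (ν i : ℝ)) (fun j => (μ j : ℝ)) E = d) :
    m + n ≤ E.card + d ∧ (d < dStar ν μ → m + n + 1 ≤ E.card + d) :=
  stmt_7_general hm ν μ hν E d hne hd
end
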